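/- arXiv:2305.00587 — 13 statements merged into one kernel-verified Lean document; each statement's English description precedes it below -/
import Mathlib

section
/- Let S be a semiring with a bi-absorbing element o (i.e., o is multiplicatively absorbing and a + o = o for all a in S). Then for every n ≥ 2, the matrix semiring M_n(S) is not subdirectly irreducible. -/
def IsCong {T : Type} (add mul : T → T → T) (r : T → T → Prop) : Prop :=
  Equivalence r ∧ (∀ a b c d, r a b → r c d → r (add a c) (add b d)) ∧
    (∀ a b c d, r a b → r c d → r (mul a c) (mul b d))

def SubIrr {T : Type} (add mul : T → T → T) : Prop :=
  ∃ r : T → T → Prop, IsCong add mul r ∧ r ≠ (· = ·) ∧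
    ∀ s : T → T → Prop, IsCong add mul s → s ≠ (· = ·) → ∀ a b, r a b → s a b

def CongSimple {T : Type} (add mul : T → T → T) : Prop :=
  (∃ a b : T, a ≠ b) ∧
    ∀ r : T → T → Prop, IsCong add mul r → r = (· = ·) ∨ r = fun _ _ => True

def IsSemiring {S : Type} (add mul : S → S → S) : Prop :=
  (∀ a b, add a b = add b a) ∧ (∀ a b c, add (add a b) c = add a (add b c)) ∧
    (∀ a b c, mul (mul a b) c = mul a (mul b c)) ∧
    (∀ a b c, mul a (add b c) = add (mul a b) (mul a c)) ∧
    (∀ a b c, mul (add a b) c = add (mul a c) (mul b c))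

def finSum {S : Type} (add : S → S → S) : {n : ℕ} → (Fin (n + 1) → S) → S
  | 0, f => f 0
  | _ + 1, f => add (finSum add fun i => f i.castSucc) (f (Fin.last _))

def matAdd {S : Type} (add : S → S → S) {n : ℕ} (A B : Fin n → Fin n → S) :
    Fin n → Fin n → S :=
  fun i j => add (A i j) (B i j)

def matMul {S : Type} (add mul : S → S → S) {n : ℕ}
    (A B : Fin (n + 1) → Fin (n + 1) → S) : Fin (n + 1) → Fin (n + 1) → S :=
  fun i j => finSum add fun k => mul (A i k) (B k j)

def AlmostIntegral {S : Type} (add mul : S → S → S) : Prop :=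
  IsSemiring add mul ∧ (∀ a : S, add a a = a) ∧
    ∀ a b : S, add (add (mul a b) (mul b a)) a = a

def IsZero {S : Type} (add mul : S → S → S) (z : S) : Prop :=
  ∀ x, mul z x = z ∧ mul x z = z ∧ add z x = x

def SepCond {S : Type} (mul : S → S → S) (z : S) (a b : S) : Prop :=
  (a ≠ z ∧ b = z) ∨ (∃ c, mul c a ≠ z ∧ mul c b = z) ∨
    (∃ d, mul a d ≠ z ∧ mul b d = z) ∨
    ∃ c d, mul (mul c a) d ≠ z ∧ mul (mul c b) d = z


lemma finSum_eq_o {S : Type} (add : S → S → S) (o : S)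
    (hcomm : ∀ a b, add a b = add b a) (habs : ∀ a, add a o = o) :
    ∀ {n : ℕ} (f : Fin (n + 1) → S), (∃ k, f k = o) → finSum add f = o := by
  intro n
  induction n with
  | zero =>
    intro f ⟨k, hk⟩
    have : k = 0 := Fin.ext (by have := k.isLt; omega)
    subst this
    exact hk
  | succ n ih =>
    intro f ⟨k, hk⟩
    show add (finSum add fun i => f i.castSucc) (f (Fin.last _)) = o
    by_cases hkl : k = Fin.last (n + 1)
    · subst hkl
      rw [hk]
      exact habs _
    · have hex : ∃ i : Fin (n + 1), f i.castSucc = o :=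
        ⟨k.castPred hkl, by rwa [Fin.castSucc_castPred]⟩
      rw [ih _ hex, hcomm]
      exact habs _

def Po {S : Type} (o : S) {n : ℕ} (i j : Fin n) (A : Fin n → Fin n → S) : Prop :=
  ∀ p q, ¬(p = i ∧ q = j) → A p q = o

lemma rel_isCong {S : Type} (add mul : S → S → S) (hS : IsSemiring add mul) (o : S)
    (ho : ∀ a : S, mul o a = o ∧ mul a o = o ∧ add a o = o) {m : ℕ} (i j : Fin (m + 2)) :
    IsCong (matAdd add) (matMul add mul)
      (fun A B : Fin (m + 2) → Fin (m + 2) → S =>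
        A = B ∨ (Po o i j A ∧ Po o i j B)) := by
  have habs : ∀ a, add a o = o := fun a => (ho a).2.2
  have habs' : ∀ a, add o a = o := fun a => by rw [hS.1]; exact habs a
  have addPl : ∀ A C : Fin (m + 2) → Fin (m + 2) → S,
      Po o i j A → Po o i j (matAdd add A C) := by
    intro A C hA p q hpq
    show add (A p q) (C p q) = o
    rw [hA p q hpq]
    exact habs' _
  have addPr : ∀ A C : Fin (m + 2) → Fin (m + 2) → S,
      Po o i j C → Po o i j (matAdd add A C) := by
    intro A C hC p q hpq
    show add (A p q) (C p q) = o
    rw [hC p q hpq]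
    exact habs _
  have mulPl : ∀ A C : Fin (m + 2) → Fin (m + 2) → S,
      Po o i j A → Po o i j (matMul add mul A C) := by
    intro A C hA p q hpq
    show finSum add (fun k => mul (A p k) (C k q)) = o
    apply finSum_eq_o add o hS.1 habs
    by_cases hp : p = i
    · obtain ⟨k, hk⟩ := exists_ne j
      exact ⟨k, by rw [hA p k (fun h => hk h.2), (ho _).1]⟩
    · exact ⟨j, by rw [hA p j (fun h => hp h.1), (ho _).1]⟩
  have mulPr : ∀ A C : Fin (m + 2) → Fin (m + 2) → S,
      Po o i j C → Po o i j (matMul add mul A C) := by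
    intro A C hC p q hpq
    show finSum add (fun k => mul (A p k) (C k q)) = o
    apply finSum_eq_o add o hS.1 habs
    by_cases hq : q = j
    · obtain ⟨k, hk⟩ := exists_ne i
      exact ⟨k, by rw [hC k q (fun h => hk h.1), (ho _).2.1]⟩
    · exact ⟨i, by rw [hC i q (fun h => hq h.2), (ho _).2.1]⟩
  refine ⟨⟨fun A => Or.inl rfl, ?_, ?_⟩, ?_, ?_⟩
  · rintro A B (rfl | ⟨h1, h2⟩)
    · exact Or.inl rfl
    · exact Or.inr ⟨h2, h1⟩
  · rintro A B C (rfl | ⟨h1, h2⟩) hbc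
    · exact hbc
    · rcases hbc with rfl | ⟨h3, h4⟩
      · exact Or.inr ⟨h1, h2⟩
      · exact Or.inr ⟨h1, h4⟩
  · rintro A B C D (rfl | ⟨h1, h2⟩) (rfl | ⟨h3, h4⟩)
    · exact Or.inl rfl
    · exact Or.inr ⟨addPr A C h3, addPr A D h4⟩
    · exact Or.inr ⟨addPl A C h1, addPl B C h2⟩
    · exact Or.inr ⟨addPl A C h1, addPl B D h2⟩
  · rintro A B C D (rfl | ⟨h1, h2⟩) (rfl | ⟨h3, h4⟩)
    · exact Or.inl rfl
    · exact Or.inr ⟨mulPr A C h3, mulPr A D h4⟩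
    · exact Or.inr ⟨mulPl A C h1, mulPl B C h2⟩
    · exact Or.inr ⟨mulPl A C h1, mulPl B D h2⟩

/-- A semiring with a bi-absorbing element has no subdirectly irreducible
matrix semiring `M_n(S)` for `n ≥ 2`. -/
theorem stmt_0 {S : Type} (add mul : S → S → S) (hS : IsSemiring add mul)
    (o : S) (ho : ∀ a : S, mul o a = o ∧ mul a o = o ∧ add a o = o) :
    ∀ m : ℕ, ¬ SubIrr (T := Fin (m + 2) → Fin (m + 2) → S) (matAdd add) (matMul add mul) := by
  intro m hSI
  obtain ⟨r, hr, hrne, hleast⟩ := hSI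
  apply hrne
  by_cases hsing : ∀ a : S, a = o
  · funext A B
    apply propext
    constructor
    · intro _
      funext p q
      rw [hsing (A p q), hsing (B p q)]
    · rintro rfl
      exact hr.1.refl A
  · push_neg at hsing
    obtain ⟨a, ha⟩ := hsing
    have h01 : (0 : Fin (m + 2)) ≠ 1 := by
      intro h
      have := congrArg Fin.val h
      simp [Fin.val_zero, Fin.val_one] at this
    have relne : ∀ i j : Fin (m + 2),
        (fun A B : Fin (m + 2) → Fin (m + 2) → S =>
          A = B ∨ (Po o i j A ∧ Po o i j B)) ≠ (· = ·) := by
      intro i j h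
      set A : Fin (m + 2) → Fin (m + 2) → S := fun _ _ => o with hAdef
      set B : Fin (m + 2) → Fin (m + 2) → S :=
        fun p q => if p = i ∧ q = j then a else o with hBdef
      have hrel : A = B ∨ (Po o i j A ∧ Po o i j B) :=
        Or.inr ⟨fun p q _ => rfl, fun p q hpq => if_neg hpq⟩
      have hrel2 : A = B := (congrFun (congrFun h A) B).mp hrel
      have hBij : B i j = a := if_pos ⟨rfl, rfl⟩
      have hAij : A i j = B i j := by rw [hrel2]
      rw [hBij] at hAij
      exact ha hAij.symm
    have h00 := hleast _ (rel_isCong add mul hS o ho 0 0) (relne 0 0)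
    have h01' := hleast _ (rel_isCong add mul hS o ho 0 1) (relne 0 1)
    funext A B
    apply propext
    constructor
    · intro hAB
      rcases h00 A B hAB with rfl | ⟨hA0, hB0⟩
      · rfl
      rcases h01' A B hAB with rfl | ⟨hA1, hB1⟩
      · rfl
      funext p q
      by_cases hq : q = (0 : Fin (m + 2))
      · exact (hA1 p q (fun h => h01 (hq.symm.trans h.2))).trans
          (hB1 p q (fun h => h01 (hq.symm.trans h.2))).symm
      · exact (hA0 p q (fun h => hq h.2)).trans
          (hB0 p q (fun h => hq h.2)).symm
    · rintro rfl
      exact hr.1.refl A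
end

section
/- Let S be a semiring such that the matrix semiring M_n(S) is subdirectly irreducible for some n ≥ 2. Then |SS| ≥ 2, i.e., the set of products {ab : a,b ∈ S} has at least two elements. -/
/-- If `M_n(S)` is subdirectly irreducible for some `n ≥ 2`, then `|SS| ≥ 2`. -/
theorem stmt_1 {S : Type} (add mul : S → S → S) (hS : IsSemiring add mul)
    (h : ∃ m : ℕ,
      SubIrr (T := Fin (m + 2) → Fin (m + 2) → S) (matAdd add) (matMul add mul)) :
    ∃ a b c d : S, mul a b ≠ mul c d := by
  classical
  by_contra hcp
  push_neg at hcp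
  obtain ⟨m, r, hcong, hne, hmin⟩ := h
  have hmm : ∀ (A B C D : Fin (m+2) → Fin (m+2) → S),
      matMul add mul A B = matMul add mul C D := by
    intro A B C D
    funext i j
    unfold matMul
    congr 1
    funext k
    exact hcp _ _ _ _
  have hex : ∃ A B, r A B ∧ A ≠ B := by
    by_contra hno
    push_neg at hno
    apply hne
    funext A B
    apply propext
    constructor
    · intro h; exact hno A B h
    · rintro rfl; exact hcong.1.refl A
  obtain ⟨A, B, hrAB, hAB⟩ := hex
  have hxy : ∃ i j, A i j ≠ B i j := by
    by_contra hno; push_neg at hno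
    exact hAB (funext fun i => funext fun j => hno i j)
  obtain ⟨i0, j0, hij⟩ := hxy
  have key : ∀ p q : Fin (m+2),
      IsCong (matAdd add) (matMul add mul)
        (fun U V : Fin (m+2) → Fin (m+2) → S => ∀ k l, (k ≠ p ∨ l ≠ q) → U k l = V k l)
      ∧ (fun U V : Fin (m+2) → Fin (m+2) → S => ∀ k l, (k ≠ p ∨ l ≠ q) → U k l = V k l)
        ≠ (· = ·) := by
    intro p q
    constructor
    · refine ⟨⟨fun U k l _ => rfl, fun h k l hkl => (h k l hkl).symm,
        fun h1 h2 k l hkl => (h1 k l hkl).trans (h2 k l hkl)⟩, ?_, ?_⟩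
      · intro a b c d h1 h2 k l hkl
        unfold matAdd
        rw [h1 k l hkl, h2 k l hkl]
      · intro a b c d _ _ k l hkl
        rw [hmm a c b d]
    · intro heq
      have h0 := congrFun (congrFun heq (fun _ _ => A i0 j0))
        (fun k l => if k = p ∧ l = q then B i0 j0 else A i0 j0)
      have h1 : ∀ k l, (k ≠ p ∨ l ≠ q) →
          A i0 j0 = (if k = p ∧ l = q then B i0 j0 else A i0 j0) := by
        intro k l hkl
        rw [if_neg]
        rintro ⟨rfl, rfl⟩
        rcases hkl with hh | hh <;> exact hh rfl
      rw [h0] at h1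
      have h2 := congrFun (congrFun h1 p) q
      simp at h2
      exact hij h2
  obtain ⟨hc1, hne1⟩ := key 0 0
  obtain ⟨hc2, hne2⟩ := key 0 1
  have h1 := hmin _ hc1 hne1 A B hrAB
  have h2 := hmin _ hc2 hne2 A B hrAB
  apply hAB
  funext k l
  by_cases hk : k = 0 ∧ l = 0
  · obtain ⟨rfl, rfl⟩ := hk
    exact h2 _ _ (Or.inr (by simp))
  · push_neg at hk
    by_cases hk0 : k = 0
    · exact h1 _ _ (Or.inr (hk hk0))
    · exact h1 _ _ (Or.inl hk0)
end

section
/- Let S be a semiring such that M_n(S) is subdirectly irreducible for some n ≥ 2. Then S is subdirectly irreducible. -/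
lemma cong_ne_eq {T : Type} (add mul : T → T → T) (r : T → T → Prop)
    (hr : IsCong add mul r) (hne : r ≠ (· = ·)) : ∃ a b, r a b ∧ a ≠ b := by
  by_contra hc
  push_neg at hc
  apply hne
  funext a b
  exact propext ⟨fun h => hc a b h, fun h => h ▸ hr.1.refl a⟩

lemma finSum_cong {S : Type} (add mul : S → S → S) (s : S → S → Prop)
    (hs : IsCong add mul s) :
    ∀ {n : ℕ} (f g : Fin (n + 1) → S), (∀ i, s (f i) (g i)) →
      s (finSum add f) (finSum add g) := by
  intro n
  induction n with
  | zero => intro f g h; exact h 0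
  | succ k ih =>
      intro f g h
      exact hs.2.1 _ _ _ _ (ih _ _ fun i => h i.castSucc) (h (Fin.last _))

lemma ext_cong {S : Type} (add mul : S → S → S) (s : S → S → Prop)
    (hs : IsCong add mul s) (m : ℕ) :
    IsCong (T := Fin (m + 2) → Fin (m + 2) → S) (matAdd add) (matMul add mul)
      (fun X Y => ∀ p q, s (X p q) (Y p q)) := by
  refine ⟨⟨fun X p q => hs.1.refl _, fun h p q => hs.1.symm (h p q),
    fun h1 h2 p q => hs.1.trans (h1 p q) (h2 p q)⟩,
    fun A B C D h1 h2 p q => hs.2.1 _ _ _ _ (h1 p q) (h2 p q),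
    fun A B C D h1 h2 p q => ?_⟩
  exact finSum_cong add mul s hs _ _ fun k => hs.2.2 _ _ _ _ (h1 p k) (h2 k q)

/-- If `M_n(S)` is subdirectly irreducible for some `n ≥ 2`, then `S` is
subdirectly irreducible. -/
theorem stmt_2 {S : Type} (add mul : S → S → S) (hS : IsSemiring add mul)
    (h : ∃ m : ℕ,
      SubIrr (T := Fin (m + 2) → Fin (m + 2) → S) (matAdd add) (matMul add mul)) :
    SubIrr add mul := by
  obtain ⟨m, R₀, hR₀, hne, hmin⟩ := h
  obtain ⟨A, B, hAB, hABne⟩ := cong_ne_eq _ _ R₀ hR₀ hne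
  rw [Function.ne_iff] at hABne
  obtain ⟨i, hi⟩ := hABne
  rw [Function.ne_iff] at hi
  obtain ⟨j, hij⟩ := hi
  set r : S → S → Prop := fun a b => ∀ s : S → S → Prop,
    IsCong add mul s → s ≠ (· = ·) → s a b with hr
  have hkey : r (A i j) (B i j) := by
    intro s hs hsne
    obtain ⟨a, b, hsab, habne⟩ := cong_ne_eq _ _ s hs hsne
    have hext := ext_cong add mul s hs m
    have hextne : (fun (X Y : Fin (m+2) → Fin (m+2) → S) => ∀ p q, s (X p q) (Y p q))
        ≠ (· = ·) := by
      intro hc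
      set X : Fin (m+2) → Fin (m+2) → S := fun _ _ => a with hX
      set Y : Fin (m+2) → Fin (m+2) → S := fun _ _ => b with hY
      have h1 : ∀ p q, s (X p q) (Y p q) := fun _ _ => hsab
      have h2 : X = Y := cast (congrFun (congrFun hc X) Y) h1
      exact habne (congrFun (congrFun h2 0) 0)
    exact hmin _ hext hextne A B hAB i j
  refine ⟨r, ⟨⟨fun a s hs _ => hs.1.refl a,
    fun h s hs hn => hs.1.symm (h s hs hn),
    fun h1 h2 s hs hn => hs.1.trans (h1 s hs hn) (h2 s hs hn)⟩,
    fun a b c d h1 h2 s hs hn => hs.2.1 _ _ _ _ (h1 s hs hn) (h2 s hs hn),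
    fun a b c d h1 h2 s hs hn => hs.2.2 _ _ _ _ (h1 s hs hn) (h2 s hs hn)⟩,
    ?_, fun s hs hn a b hab => hab s hs hn⟩
  intro hc
  rw [hc] at hkey
  exact hij hkey
end

section
/- Let S be an additively idempotent semiring such that for all a, b ∈ S there is c ∈ S with c ≤ a and c ≤ b (where x ≤ y iff x + y = y), and let n ≥ 2. If S is congruence-simple and for every a, b, e ∈ S with a ≠ b there exist c, d, f, g ∈ S with ca + fe ≠ cb + fe and ad + eg ≠ bd + eg, then M_n(S) is congruence-simple. -/
namespace St3
variable {S : Type} {add mul : S → S → S}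

theorem le_trans' (hassoc : ∀ a b c, add (add a b) c = add a (add b c))
    {a b c : S} (h1 : add a b = b) (h2 : add b c = c) : add a c = c := by
  rw [← h2, ← hassoc, h1]

theorem le_antisymm' (hcomm : ∀ a b, add a b = add b a)
    {a b : S} (h1 : add a b = b) (h2 : add b a = a) : a = b := by
  rw [← h2, hcomm, h1]

theorem le_add_left (hassoc : ∀ a b c, add (add a b) c = add a (add b c))
    (hidem : ∀ a, add a a = a) (a b : S) : add a (add a b) = add a b := by
  rw [← hassoc, hidem]

theorem le_add_right (hcomm : ∀ a b, add a b = add b a)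
    (hassoc : ∀ a b c, add (add a b) c = add a (add b c))
    (hidem : ∀ a, add a a = a) (a b : S) : add b (add a b) = add a b := by
  rw [hcomm b, hassoc, hidem]

theorem add_le' (hassoc : ∀ a b c, add (add a b) c = add a (add b c))
    {a b c : S} (h1 : add a c = c) (h2 : add b c = c) : add (add a b) c = c := by
  rw [hassoc, h2, h1]

theorem mul_le_left (hdl : ∀ a b c, mul a (add b c) = add (mul a b) (mul a c))
    {a b : S} (h : add a b = b) (c : S) : add (mul c a) (mul c b) = mul c b := by
  rw [← hdl, h]

theorem mul_le_right (hdr : ∀ a b c, mul (add a b) c = add (mul a c) (mul b c))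
    {a b : S} (h : add a b = b) (c : S) : add (mul a c) (mul b c) = mul b c := by
  rw [← hdr, h]

theorem finSum_le (hassoc : ∀ a b c, add (add a b) c = add a (add b c)) {z : S} :
    ∀ {n : ℕ} (f : Fin (n + 1) → S), (∀ k, add (f k) z = z) →
      add (finSum add f) z = z := by
  intro n
  induction n with
  | zero => intro f h; exact h 0
  | succ n ih =>
      intro f h
      exact add_le' hassoc (ih _ fun k => h k.castSucc) (h (Fin.last _))

theorem le_finSum (hcomm : ∀ a b, add a b = add b a)
    (hassoc : ∀ a b c, add (add a b) c = add a (add b c))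
    (hidem : ∀ a, add a a = a) :
    ∀ {n : ℕ} (f : Fin (n + 1) → S) (k : Fin (n + 1)),
      add (f k) (finSum add f) = finSum add f := by
  intro n
  induction n with
  | zero =>
      intro f k
      have hk : k = 0 := Fin.fin_one_eq_zero k
      rw [hk]; exact hidem _
  | succ n ih =>
      intro f k
      induction k using Fin.lastCases with
      | last => exact le_add_right hcomm hassoc hidem _ _
      | cast k =>
          exact le_trans' hassoc (ih (fun i => f i.castSucc) k)
            (le_add_left hassoc hidem _ _)

theorem finSum_const (hidem : ∀ a, add a a = a) :
    ∀ {n : ℕ} (x : S), finSum add (fun _ : Fin (n + 1) => x) = x := by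
  intro n
  induction n with
  | zero => intro x; rfl
  | succ n ih =>
      intro x
      show add (finSum add fun _ => x) x = x
      rw [ih, hidem]

theorem lowerBound (hassoc : ∀ a b c, add (add a b) c = add a (add b c))
    (hidem : ∀ a, add a a = a)
    (hdir : ∀ a b : S, ∃ c : S, add c a = a ∧ add c b = b) :
    ∀ {n : ℕ} (f : Fin (n + 1) → S), ∃ c, ∀ k, add c (f k) = f k := by
  intro n
  induction n with
  | zero =>
      intro f
      exact ⟨f 0, fun k => by
        have hk : k = 0 := Fin.fin_one_eq_zero k
        rw [hk]; exact hidem _⟩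
  | succ n ih =>
      intro f
      obtain ⟨c, hc⟩ := ih fun i => f i.castSucc
      obtain ⟨c', hc1, hc2⟩ := hdir c (f (Fin.last _))
      refine ⟨c', fun k => ?_⟩
      induction k using Fin.lastCases with
      | last => exact hc2
      | cast k => exact le_trans' hassoc hc1 (hc k)

end St3

/-- Sufficiency part of the characterization of congruence-simplicity of
`M_n(S)` for downward directed additively idempotent `S`. -/
theorem stmt_3 {S : Type} (add mul : S → S → S) (hS : IsSemiring add mul)
    (hidem : ∀ a : S, add a a = a)
    (hdir : ∀ a b : S, ∃ c : S, add c a = a ∧ add c b = b)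
    (hsimple : CongSimple add mul)
    (hsep : ∀ a b e : S, a ≠ b → ∃ c d f g : S,
      add (mul c a) (mul f e) ≠ add (mul c b) (mul f e) ∧
        add (mul a d) (mul e g) ≠ add (mul b d) (mul e g)) :
    ∀ m : ℕ,
      CongSimple (T := Fin (m + 2) → Fin (m + 2) → S) (matAdd add) (matMul add mul) := by
  obtain ⟨hcomm, hassoc, hmassoc, hdl, hdr⟩ := hS
  intro m
  constructor
  · obtain ⟨a, b, hab⟩ := hsimple.1
    exact ⟨(fun _ _ => a), (fun _ _ => b),
      fun h => hab (congrFun (congrFun h 0) 0)⟩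
  intro r hr
  by_cases hid : r = (· = ·)
  · exact Or.inl hid
  right
  obtain ⟨hrE, hrA, hrM⟩ := hr
  -- multiplication of constant matrices is constant
  have hmulC : ∀ x z : S,
      matMul add mul (fun _ _ => x : Fin (m + 2) → Fin (m + 2) → S) (fun _ _ => z)
        = fun _ _ => mul x z := by
    intro x z
    funext i' j'
    exact St3.finSum_const hidem _
  -- Step 0: a nontrivially related pair
  obtain ⟨A₀, B₀, hR0, hAB0⟩ : ∃ A B, r A B ∧ A ≠ B := by
    by_contra hc
    push_neg at hc
    apply hid
    funext A B
    exact propext ⟨fun h => hc A B h, fun h => h ▸ hrE.refl A⟩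
  -- WLOG entrywise A ≤ B
  obtain ⟨A, B, hRAB, hABne, hle⟩ :
      ∃ A B, r A B ∧ A ≠ B ∧ ∀ i j, add (A i j) (B i j) = B i j := by
    have hAD : r A₀ (matAdd add A₀ B₀) := by
      have h0 := hrA A₀ A₀ A₀ B₀ (hrE.refl A₀) hR0
      have hAA : matAdd add A₀ A₀ = A₀ := funext fun i => funext fun j => hidem _
      rwa [hAA] at h0
    have hBD : r B₀ (matAdd add A₀ B₀) := by
      have h0 := hrA A₀ B₀ B₀ B₀ hR0 (hrE.refl B₀)
      have hBB : matAdd add B₀ B₀ = B₀ := funext fun i => funext fun j => hidem _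
      rw [hBB] at h0
      exact hrE.symm h0
    by_cases hA : A₀ = matAdd add A₀ B₀
    · exact ⟨B₀, matAdd add A₀ B₀, hBD, fun h => hAB0 (hA.trans h.symm),
        fun i j => St3.le_add_right hcomm hassoc hidem _ _⟩
    · exact ⟨A₀, matAdd add A₀ B₀, hAD, hA,
        fun i j => St3.le_add_left hassoc hidem _ _⟩
  obtain ⟨i, j, hab⟩ : ∃ i j, A i j ≠ B i j := by
    by_contra hc
    push_neg at hc
    exact hABne (funext fun i => funext fun j => hc i j)
  -- Row step
  set e₁ := finSum add fun p => B p j with he₁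
  obtain ⟨c, d, f, g, h1, -⟩ := hsep (A i j) (B i j) e₁ hab
  set v : Fin (m + 2) → S := fun p => if p = i then c else f with hv
  have hvi : v i = c := by rw [hv]; simp
  set X := matAdd add (matMul add mul (fun _ q => v q) A) (fun _ _ => mul f e₁) with hX
  set Y := matAdd add (matMul add mul (fun _ q => v q) B) (fun _ _ => mul f e₁) with hY
  have hrXY : r X Y :=
    hrA _ _ _ _ (hrM _ _ _ _ (hrE.refl _) hRAB) (hrE.refl _)
  set a' := add (mul c (A i j)) (mul f e₁) with ha'
  set b' := add (mul c (B i j)) (mul f e₁) with hb'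
  have hfe₁a' : add (mul f e₁) a' = a' := by
    rw [ha']; exact St3.le_add_right hcomm hassoc hidem _ _
  have hfe₁b' : add (mul f e₁) b' = b' := by
    rw [hb']; exact St3.le_add_right hcomm hassoc hidem _ _
  have hBe₁ : ∀ p, add (B p j) e₁ = e₁ := by
    intro p
    rw [he₁]
    exact St3.le_finSum hcomm hassoc hidem (fun p => B p j) p
  have hXj : ∀ k, X k j = a' := by
    intro k
    show add (finSum add fun p => mul (v p) (A p j)) (mul f e₁) = a'
    refine St3.le_antisymm' hcomm ?_ ?_
    · refine St3.add_le' hassoc (St3.finSum_le hassoc _ fun p => ?_) hfe₁a'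
      by_cases hp : p = i
      · rw [hp, hvi, ha']
        exact St3.le_add_left hassoc hidem _ _
      · have hvp : v p = f := by rw [hv]; simp [hp]
        rw [hvp]
        refine St3.le_trans' hassoc (St3.mul_le_left hdl (hle p j) f) ?_
        exact St3.le_trans' hassoc (St3.mul_le_left hdl (hBe₁ p) f) hfe₁a'
    · rw [ha']
      refine St3.add_le' hassoc ?_ (St3.le_add_right hcomm hassoc hidem _ _)
      refine St3.le_trans' hassoc ?_ (St3.le_add_left hassoc hidem _ _)
      have h0 := St3.le_finSum hcomm hassoc hidem (fun p => mul (v p) (A p j)) i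
      rwa [hvi] at h0
  have hYj : ∀ k, Y k j = b' := by
    intro k
    show add (finSum add fun p => mul (v p) (B p j)) (mul f e₁) = b'
    refine St3.le_antisymm' hcomm ?_ ?_
    · refine St3.add_le' hassoc (St3.finSum_le hassoc _ fun p => ?_) hfe₁b'
      by_cases hp : p = i
      · rw [hp, hvi, hb']
        exact St3.le_add_left hassoc hidem _ _
      · have hvp : v p = f := by rw [hv]; simp [hp]
        rw [hvp]
        exact St3.le_trans' hassoc (St3.mul_le_left hdl (hBe₁ p) f) hfe₁b'
    · rw [hb']
      refine St3.add_le' hassoc ?_ (St3.le_add_right hcomm hassoc hidem _ _)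
      refine St3.le_trans' hassoc ?_ (St3.le_add_left hassoc hidem _ _)
      have h0 := St3.le_finSum hcomm hassoc hidem (fun p => mul (v p) (B p j)) i
      rwa [hvi] at h0
  have hXYle : ∀ k l, add (X k l) (Y k l) = Y k l := by
    intro k l
    show add (add (finSum add fun p => mul (v p) (A p l)) (mul f e₁))
      (add (finSum add fun p => mul (v p) (B p l)) (mul f e₁))
      = add (finSum add fun p => mul (v p) (B p l)) (mul f e₁)
    refine St3.add_le' hassoc ?_ (St3.le_add_right hcomm hassoc hidem _ _)
    refine St3.le_trans' hassoc (St3.finSum_le hassoc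
      (fun p => mul (v p) (A p l)) fun p => ?_) (St3.le_add_left hassoc hidem _ _)
    exact St3.le_trans' hassoc (St3.mul_le_left hdl (hle p l) (v p))
      (St3.le_finSum hcomm hassoc hidem (fun p => mul (v p) (B p l)) p)
  -- Column step
  set e₂ := finSum add fun p => Y 0 p with he₂
  obtain ⟨c₂, d₂, f₂, g₂, -, h2⟩ := hsep a' b' e₂ h1
  set w : Fin (m + 2) → S := fun p => if p = j then d₂ else g₂ with hw
  have hwj : w j = d₂ := by rw [hw]; simp
  set ZX := matAdd add (matMul add mul X (fun p _ => w p)) (fun _ _ => mul e₂ g₂) with hZX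
  set ZY := matAdd add (matMul add mul Y (fun p _ => w p)) (fun _ _ => mul e₂ g₂) with hZY
  have hrZ : r ZX ZY := hrA _ _ _ _ (hrM _ _ _ _ hrXY (hrE.refl _)) (hrE.refl _)
  set u := add (mul a' d₂) (mul e₂ g₂) with hu
  set u' := add (mul b' d₂) (mul e₂ g₂) with hu'
  have heg_u : add (mul e₂ g₂) u = u := by
    rw [hu]; exact St3.le_add_right hcomm hassoc hidem _ _
  have heg_u' : add (mul e₂ g₂) u' = u' := by
    rw [hu']; exact St3.le_add_right hcomm hassoc hidem _ _
  have hYle₂ : ∀ k p, add (Y k p) e₂ = e₂ := by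
    intro k p
    have h0 : Y k p = Y 0 p := rfl
    rw [h0, he₂]
    exact St3.le_finSum hcomm hassoc hidem (fun p => Y 0 p) p
  have hZXc : ∀ k l, ZX k l = u := by
    intro k l
    show add (finSum add fun p => mul (X k p) (w p)) (mul e₂ g₂) = u
    refine St3.le_antisymm' hcomm ?_ ?_
    · refine St3.add_le' hassoc (St3.finSum_le hassoc _ fun p => ?_) heg_u
      by_cases hp : p = j
      · rw [hp, hwj, hXj k, hu]
        exact St3.le_add_left hassoc hidem _ _
      · have hwp : w p = g₂ := by rw [hw]; simp [hp]
        rw [hwp]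
        refine St3.le_trans' hassoc (St3.mul_le_right hdr (hXYle k p) g₂) ?_
        exact St3.le_trans' hassoc (St3.mul_le_right hdr (hYle₂ k p) g₂) heg_u
    · rw [hu]
      refine St3.add_le' hassoc ?_ (St3.le_add_right hcomm hassoc hidem _ _)
      refine St3.le_trans' hassoc ?_ (St3.le_add_left hassoc hidem _ _)
      have h0 := St3.le_finSum hcomm hassoc hidem (fun p => mul (X k p) (w p)) j
      rwa [hwj, hXj k] at h0
  have hZYc : ∀ k l, ZY k l = u' := by
    intro k l
    show add (finSum add fun p => mul (Y k p) (w p)) (mul e₂ g₂) = u'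
    refine St3.le_antisymm' hcomm ?_ ?_
    · refine St3.add_le' hassoc (St3.finSum_le hassoc _ fun p => ?_) heg_u'
      by_cases hp : p = j
      · rw [hp, hwj, hYj k, hu']
        exact St3.le_add_left hassoc hidem _ _
      · have hwp : w p = g₂ := by rw [hw]; simp [hp]
        rw [hwp]
        exact St3.le_trans' hassoc (St3.mul_le_right hdr (hYle₂ k p) g₂) heg_u'
    · rw [hu']
      refine St3.add_le' hassoc ?_ (St3.le_add_right hcomm hassoc hidem _ _)
      refine St3.le_trans' hassoc ?_ (St3.le_add_left hassoc hidem _ _)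
      have h0 := St3.le_finSum hcomm hassoc hidem (fun p => mul (Y k p) (w p)) j
      rwa [hwj, hYj k] at h0
  have hZXeq : ZX = (fun _ _ => u) := funext fun k => funext fun l => hZXc k l
  have hZYeq : ZY = (fun _ _ => u') := funext fun k => funext fun l => hZYc k l
  rw [hZXeq, hZYeq] at hrZ
  -- Step 3: the induced congruence on S is full
  set s : S → S → Prop := fun x y => r (fun _ _ => x) (fun _ _ => y) with hs
  have hscong : IsCong add mul s := by
    refine ⟨⟨fun x => hrE.refl _, fun h => hrE.symm h, fun h h' => hrE.trans h h'⟩, ?_, ?_⟩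
    · intro x y z z' hxy hzz
      exact hrA _ _ _ _ hxy hzz
    · intro x y z z' hxy hzz
      have h0 := hrM _ _ _ _ hxy hzz
      rw [hmulC, hmulC] at h0
      exact h0
  have hsfull : ∀ x y : S, r (fun _ _ => x) (fun _ _ => y) := by
    rcases hsimple.2 s hscong with h | h
    · exfalso
      have h0 : s u u' := hrZ
      rw [h] at h0
      exact h2 h0
    · intro x y
      exact of_eq_true (congrFun (congrFun h x) y)
  -- Step 4: every matrix is related to a constant matrix
  have hkey : ∀ M : Fin (m + 2) → Fin (m + 2) → S,
      r M (fun _ _ => finSum add fun i' => finSum add fun j' => M i' j') := by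
    intro M
    have hrowlb : ∀ i', ∃ c0, ∀ j', add c0 (M i' j') = M i' j' :=
      fun i' => St3.lowerBound hassoc hidem hdir (M i')
    choose rb hrb using hrowlb
    obtain ⟨ε, hε0⟩ := St3.lowerBound hassoc hidem hdir rb
    have hε : ∀ i' j', add ε (M i' j') = M i' j' :=
      fun i' j' => St3.le_trans' hassoc (hε0 i') (hrb i' j')
    have h0 := hrA M M (fun _ _ => ε)
      (fun _ _ => finSum add fun i' => finSum add fun j' => M i' j')
      (hrE.refl M) (hsfull ε _)
    have e1 : matAdd add M (fun _ _ => ε) = M := by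
      funext i' j'
      show add (M i' j') ε = M i' j'
      rw [hcomm]; exact hε i' j'
    have e2 : matAdd add M
        (fun _ _ => finSum add fun i' => finSum add fun j' => M i' j')
        = (fun _ _ => finSum add fun i' => finSum add fun j' => M i' j') := by
      funext i' j'
      show add (M i' j') (finSum add fun i' => finSum add fun j' => M i' j')
        = finSum add fun i' => finSum add fun j' => M i' j'
      exact St3.le_trans' hassoc
        (St3.le_finSum hcomm hassoc hidem (fun j' => M i' j') j')
        (St3.le_finSum hcomm hassoc hidem (fun i' => finSum add fun j' => M i' j') i')
    rw [e1, e2] at h0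
    exact h0
  funext M N
  refine eq_true ?_
  exact hrE.trans (hrE.trans (hkey M) (hsfull _ _)) (hrE.symm (hkey N))
end

section
/- Let S be an additively idempotent semiring and n ≥ 2 such that M_n(S) is congruence-simple. Then for every a, b, e ∈ S with a ≠ b there exist c, d, f, g ∈ S such that ca + fe ≠ cb + fe and ad + eg ≠ bd + eg. -/
/-!
By transposition `M_n(S)` is anti-isomorphic to `M_n(Sᵒᵖ)`, so it suffices to separate `a ≠ b`
from the left. If `c a + f e = c b + f e` for all `c, f`, the congruence `X ~ Y ↔ ∀ C, C X = C Y`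
identifies the distinct matrices all of whose columns are `(a, e, …, e)` resp. `(b, e, …, e)`,
so by simplicity it is total; on constant matrices (where idempotency collapses the sums) this
gives `w u = w v` for all `w, u, v`. But then row `0` of `X Y` depends only on row `0` of `X`,
so equality of row `0` is a congruence, and for `n ≥ 2` it is neither equality nor total.
-/

section FinSum

variable {S : Type} {add mul : S → S → S}

lemma add_add_add_comm_of (hc : ∀ a b : S, add a b = add b a)
    (ha : ∀ a b c : S, add (add a b) c = add a (add b c)) (a b c d : S) :
    add (add a b) (add c d) = add (add a c) (add b d) := by
  rw [ha, ← ha b, hc b c, ha c, ← ha a]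

lemma finSum_const_of_idem (hidem : ∀ a : S, add a a = a) :
    ∀ (n : ℕ) (t : S), finSum add (fun _ : Fin (n + 1) => t) = t
  | 0, _ => rfl
  | n + 1, t => by
    change add (finSum add fun _ : Fin (n + 1) => t) t = t
    rw [finSum_const_of_idem hidem n t, hidem]

lemma finSum_add_distrib (hc : ∀ a b : S, add a b = add b a)
    (ha : ∀ a b c : S, add (add a b) c = add a (add b c)) :
    ∀ (n : ℕ) (f g : Fin (n + 1) → S),
      finSum add (fun k => add (f k) (g k)) = add (finSum add f) (finSum add g)
  | 0, _, _ => rfl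
  | n + 1, f, g => by
    change add (finSum add fun k : Fin (n + 1) => add (f k.castSucc) (g k.castSucc))
      (add (f (Fin.last _)) (g (Fin.last _))) = _
    rw [finSum_add_distrib hc ha n]
    exact add_add_add_comm_of hc ha _ _ _ _

lemma mul_finSum (hdl : ∀ a b c : S, mul a (add b c) = add (mul a b) (mul a c)) :
    ∀ (n : ℕ) (x : S) (f : Fin (n + 1) → S),
      mul x (finSum add f) = finSum add fun k => mul x (f k)
  | 0, _, _ => rfl
  | n + 1, x, f => by
    change mul x (add (finSum add fun k : Fin (n + 1) => f k.castSucc) (f (Fin.last _))) = _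
    rw [hdl, mul_finSum hdl n]
    rfl

lemma finSum_mul (hdr : ∀ a b c : S, mul (add a b) c = add (mul a c) (mul b c)) :
    ∀ (n : ℕ) (x : S) (f : Fin (n + 1) → S),
      mul (finSum add f) x = finSum add fun k => mul (f k) x
  | 0, _, _ => rfl
  | n + 1, x, f => by
    change mul (add (finSum add fun k : Fin (n + 1) => f k.castSucc) (f (Fin.last _))) x = _
    rw [hdr, finSum_mul hdr n]
    rfl

lemma finSum_comm (hc : ∀ a b : S, add a b = add b a)
    (ha : ∀ a b c : S, add (add a b) c = add a (add b c)) :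
    ∀ (n p : ℕ) (f : Fin (n + 1) → Fin (p + 1) → S),
      finSum add (fun k => finSum add fun l => f k l)
        = finSum add (fun l => finSum add fun k => f k l)
  | 0, _, _ => rfl
  | n + 1, p, f => by
    change add (finSum add fun k : Fin (n + 1) => finSum add fun l => f k.castSucc l)
      (finSum add fun l => f (Fin.last _) l) = _
    rw [finSum_comm hc ha n p, ← finSum_add_distrib hc ha]
    rfl

lemma finSum_succ (ha : ∀ a b c : S, add (add a b) c = add a (add b c)) :
    ∀ (n : ℕ) (f : Fin (n + 2) → S),
      finSum add f = add (f 0) (finSum add fun k : Fin (n + 1) => f k.succ)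
  | 0, _ => rfl
  | n + 1, f => by
    change add (finSum add fun k : Fin (n + 2) => f k.castSucc) (f (Fin.last _)) = _
    rw [finSum_succ ha n, ha]
    rfl

end FinSum

section Matrix

variable {S : Type} {add mul : S → S → S}

lemma matMul_assoc (hS : IsSemiring add mul) {n : ℕ} (A B C : Fin (n + 1) → Fin (n + 1) → S) :
    matMul add mul (matMul add mul A B) C = matMul add mul A (matMul add mul B C) := by
  obtain ⟨hc, ha, hma, hdl, hdr⟩ := hS
  funext i j
  change finSum add (fun k => mul (finSum add fun l => mul (A i l) (B l k)) (C k j))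
    = finSum add fun l => mul (A i l) (finSum add fun k => mul (B l k) (C k j))
  simp only [finSum_mul hdr, mul_finSum hdl, hma]
  exact finSum_comm hc ha _ _ _

lemma matMul_matAdd (hS : IsSemiring add mul) {n : ℕ} (C X Y : Fin (n + 1) → Fin (n + 1) → S) :
    matMul add mul C (matAdd add X Y) = matAdd add (matMul add mul C X) (matMul add mul C Y) := by
  obtain ⟨hc, ha, -, hdl, -⟩ := hS
  funext i j
  change finSum add (fun k => mul (C i k) (add (X k j) (Y k j))) = add _ _
  simp only [hdl]
  exact finSum_add_distrib hc ha _ _ _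

lemma matMul_const_const (hidem : ∀ a : S, add a a = a) {n : ℕ} (w u : S)
    (i j : Fin (n + 1)) :
    matMul add mul (fun _ _ => w) (fun _ _ => u) i j = mul w u :=
  finSum_const_of_idem hidem n _

end Matrix

section Congruence

variable {T : Type} {add mul : T → T → T}

lemma isCong_leftKernel (hma : ∀ x y z : T, mul (mul x y) z = mul x (mul y z))
    (hdl : ∀ x y z : T, mul x (add y z) = add (mul x y) (mul x z)) :
    IsCong add mul fun x y => ∀ c, mul c x = mul c y := by
  refine ⟨⟨fun _ _ => rfl, fun h c => (h c).symm, fun h h' c => (h c).trans (h' c)⟩, ?_, ?_⟩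
  · intro x y x' y' h h' c
    rw [hdl, hdl, h, h']
  · intro x y x' y' h h' c
    rw [← hma, h, h', hma]

lemma CongSimple.forall_of_rel_of_ne (hsimple : CongSimple add mul) {r : T → T → Prop}
    (hr : IsCong add mul r) {x y : T} (hxy : r x y) (hne : x ≠ y) : ∀ u v, r u v := by
  rcases hsimple.2 r hr with rfl | rfl
  · exact absurd hxy hne
  · exact fun _ _ => trivial

lemma CongSimple.of_anti_equiv {T' : Type} {add' mul' : T' → T' → T'}
    (hsimple : CongSimple add mul) (φ : T ≃ T') (hadd : ∀ x y, φ (add x y) = add' (φ x) (φ y))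
    (hmul : ∀ x y, φ (mul x y) = mul' (φ y) (φ x)) : CongSimple add' mul' := by
  obtain ⟨⟨x, y, hxy⟩, hsim⟩ := hsimple
  refine ⟨⟨φ x, φ y, φ.injective.ne hxy⟩, fun r hr => ?_⟩
  have hpull : IsCong add mul fun x y => r (φ x) (φ y) := by
    refine ⟨⟨fun _ => hr.1.refl _, hr.1.symm, hr.1.trans⟩, ?_, ?_⟩
    · intro x y x' y' h h'
      rw [hadd, hadd]
      exact hr.2.1 _ _ _ _ h h'
    · intro x y x' y' h h'
      rw [hmul, hmul]
      exact hr.2.2 _ _ _ _ h' h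
  rcases hsim _ hpull with h | h
  · left
    funext u v
    have := congrFun (congrFun h (φ.symm u)) (φ.symm v)
    simpa [φ.symm.injective.eq_iff] using this
  · right
    funext u v
    simpa using congrFun (congrFun h (φ.symm u)) (φ.symm v)

end Congruence

section Separation

variable {S : Type} {add mul : S → S → S}

lemma IsSemiring.flip (hS : IsSemiring add mul) : IsSemiring add fun x y => mul y x := by
  obtain ⟨hc, ha, hma, hdl, hdr⟩ := hS
  exact ⟨hc, ha, fun x y z => (hma z y x).symm, fun x y z => hdr y z x, fun x y z => hdl z x y⟩

lemma congSimple_matMul_flip {n : ℕ}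
    (hsimple : CongSimple (T := Fin (n + 1) → Fin (n + 1) → S) (matAdd add) (matMul add mul)) :
    CongSimple (T := Fin (n + 1) → Fin (n + 1) → S) (matAdd add)
      (matMul add fun x y => mul y x) :=
  hsimple.of_anti_equiv (Equiv.piComm _) (fun _ _ => rfl) (fun _ _ => rfl)

lemma not_congSimple_of_mul_eq_mul {n : ℕ} (hmul : ∀ w u v : S, mul w u = mul w v) :
    ¬ CongSimple (T := Fin (n + 2) → Fin (n + 2) → S) (matAdd add) (matMul add mul) := by
  intro hsimple
  obtain ⟨X, Y, hXY⟩ := hsimple.1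
  obtain ⟨i, hi⟩ := Function.ne_iff.1 hXY
  obtain ⟨j, hij⟩ := Function.ne_iff.1 hi
  have hrow : IsCong (T := Fin (n + 2) → Fin (n + 2) → S) (matAdd add) (matMul add mul)
      fun X Y => X 0 = Y 0 := by
    refine ⟨⟨fun _ => rfl, Eq.symm, Eq.trans⟩, ?_, ?_⟩
    · intro X Y X' Y' h h'
      funext k
      exact congrArg₂ add (congrFun h k) (congrFun h' k)
    · intro X Y X' Y' h _
      funext k
      change finSum add _ = finSum add _
      exact congrArg (finSum add) (funext fun l => by rw [h, hmul _ (X' l k) (Y' l k)])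
  have hall := hsimple.forall_of_rel_of_ne hrow
    (x := fun _ _ => X i j) (y := fun k _ => if k = 0 then X i j else Y i j) (funext fun _ => rfl)
    fun h => hij (by simpa using congrFun (congrFun h 1) 0)
  exact hij (congrFun (hall (fun _ _ => X i j) (fun _ _ => Y i j)) j)

lemma mul_eq_mul_of_forall_add_mul_eq (hS : IsSemiring add mul) (hidem : ∀ a : S, add a a = a)
    {n : ℕ} (hsimple : CongSimple (T := Fin (n + 2) → Fin (n + 2) → S) (matAdd add) (matMul add mul))
    {a b e : S} (hab : a ≠ b) (h : ∀ c f, add (mul c a) (mul f e) = add (mul c b) (mul f e))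
    (w u v : S) : mul w u = mul w v := by
  have hcol : ∀ (x : S) (C : Fin (n + 2) → Fin (n + 2) → S) (i j : Fin (n + 2)),
      matMul add mul C (fun k _ => if k = 0 then x else e) i j
        = add (mul (C i 0) x) (mul (finSum add fun k : Fin (n + 1) => C i k.succ) e) := by
    intro x C i j
    change finSum add _ = _
    rw [finSum_succ hS.2.1, finSum_mul hS.2.2.2.2]
    simp only [Fin.succ_ne_zero, ↓reduceIte]
  have hall := hsimple.forall_of_rel_of_ne
    (isCong_leftKernel (matMul_assoc hS) (matMul_matAdd hS))
    (x := fun k _ => if k = 0 then a else e) (y := fun k _ => if k = 0 then b else e)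
    (fun C => funext fun i => funext fun j => by rw [hcol, hcol, h])
    fun hAB => hab (by simpa using congrFun (congrFun hAB 0) 0)
  have := congrFun (congrFun (hall (fun _ _ => u) (fun _ _ => v) fun _ _ => w) 0) 0
  rwa [matMul_const_const hidem, matMul_const_const hidem] at this

lemma exists_add_mul_ne (hS : IsSemiring add mul) (hidem : ∀ a : S, add a a = a) {n : ℕ}
    (hsimple : CongSimple (T := Fin (n + 2) → Fin (n + 2) → S) (matAdd add) (matMul add mul))
    {a b : S} (hab : a ≠ b) (e : S) :
    ∃ c f, add (mul c a) (mul f e) ≠ add (mul c b) (mul f e) := by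
  by_contra! h
  exact not_congSimple_of_mul_eq_mul (mul_eq_mul_of_forall_add_mul_eq hS hidem hsimple hab h)
    hsimple

end Separation

/-- If `M_n(S)` is congruence-simple for an additively idempotent `S` and
`n ≥ 2`, then a separation condition holds in `S`. -/
theorem stmt_4 {S : Type} (add mul : S → S → S) (hS : IsSemiring add mul)
    (hidem : ∀ a : S, add a a = a) (m : ℕ)
    (hsimple : CongSimple (T := Fin (m + 2) → Fin (m + 2) → S) (matAdd add) (matMul add mul)) :
    ∀ a b e : S, a ≠ b → ∃ c d f g : S,
      add (mul c a) (mul f e) ≠ add (mul c b) (mul f e) ∧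
        add (mul a d) (mul e g) ≠ add (mul b d) (mul e g) := by
  intro a b e hab
  obtain ⟨c, f, hleft⟩ := exists_add_mul_ne hS hidem hsimple hab e
  obtain ⟨d, g, hright⟩ :=
    exists_add_mul_ne hS.flip hidem (congSimple_matMul_flip hsimple) hab e
  exact ⟨c, d, f, g, hleft, hright⟩
end

section
/- Let S be an additively idempotent semiring with a greatest element ω of the additive semilattice (i.e., a + ω = ω for all a ∈ S). If M_n(S) is congruence-simple for some n ≥ 2, then ω is neither left multiplicatively absorbing (ωS = {ω}) nor right multiplicatively absorbing (Sω = {ω}). -/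
namespace Stmt5Aux

section
variable {S : Type} (add : S → S → S)

lemma finSum_congr {n : ℕ} {f g : Fin (n+1) → S} (h : ∀ i, f i = g i) :
    finSum add f = finSum add g := by rw [funext h]

lemma finSum_const (hidem : ∀ a, add a a = a) {n : ℕ} (c : S) :
    finSum add (fun _ : Fin (n+1) => c) = c := by
  induction n with
  | zero => rfl
  | succ n ih =>
    show add (finSum add fun _ => c) c = c
    rw [ih, hidem]

lemma finSum_top (hc : ∀ a b, add a b = add b a) (ω : S) (hω : ∀ a, add a ω = ω)
    {n : ℕ} (f : Fin (n+1) → S) (k : Fin (n+1)) (hk : f k = ω) :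
    finSum add f = ω := by
  induction n with
  | zero =>
    have hk0 : k = 0 := Fin.fin_one_eq_zero k
    rw [hk0] at hk
    exact hk
  | succ n ih =>
    show add (finSum add fun i => f i.castSucc) (f (Fin.last _)) = ω
    rcases Fin.eq_castSucc_or_eq_last k with ⟨j, hj⟩ | hl
    · rw [ih (fun i => f i.castSucc) j (by show f j.castSucc = ω; rw [← hj]; exact hk), hc]
      exact hω _
    · rw [hl] at hk; rw [hk]; exact hω _

lemma add4 (hc : ∀ a b, add a b = add b a)
    (ha : ∀ a b c, add (add a b) c = add a (add b c)) (a b c d : S) :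
    add (add a b) (add c d) = add (add a c) (add b d) := by
  rw [ha, ← ha b c d, hc b c, ha c b d, ← ha]

lemma finSum_add (hc : ∀ a b, add a b = add b a)
    (ha : ∀ a b c, add (add a b) c = add a (add b c)) {n : ℕ} (f g : Fin (n+1) → S) :
    finSum add (fun i => add (f i) (g i)) = add (finSum add f) (finSum add g) := by
  induction n with
  | zero => rfl
  | succ n ih =>
    show add (finSum add fun i => add (f i.castSucc) (g i.castSucc)) (add (f (Fin.last _)) (g (Fin.last _)))
      = add (add (finSum add fun i => f i.castSucc) (f (Fin.last _)))
            (add (finSum add fun i => g i.castSucc) (g (Fin.last _)))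
    rw [ih, add4 add hc ha]

lemma mul_finSum (mul : S → S → S)
    (hd : ∀ a b c, mul a (add b c) = add (mul a b) (mul a c)) {n : ℕ}
    (c : S) (f : Fin (n+1) → S) :
    mul c (finSum add f) = finSum add (fun i => mul c (f i)) := by
  induction n with
  | zero => rfl
  | succ n ih =>
    show mul c (add (finSum add fun i => f i.castSucc) (f (Fin.last _)))
      = add (finSum add fun i => mul c (f i.castSucc)) (mul c (f (Fin.last _)))
    rw [hd, ih]

lemma finSum_mul (mul : S → S → S)
    (hd : ∀ a b c, mul (add a b) c = add (mul a c) (mul b c)) {n : ℕ}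
    (c : S) (f : Fin (n+1) → S) :
    mul (finSum add f) c = finSum add (fun i => mul (f i) c) := by
  induction n with
  | zero => rfl
  | succ n ih =>
    show mul (add (finSum add fun i => f i.castSucc) (f (Fin.last _))) c
      = add (finSum add fun i => mul (f i.castSucc) c) (mul (f (Fin.last _)) c)
    rw [hd, ih]

lemma finSum_comm (hc : ∀ a b, add a b = add b a)
    (ha : ∀ a b c, add (add a b) c = add a (add b c)) {n p : ℕ}
    (h : Fin (n+1) → Fin (p+1) → S) :
    finSum add (fun k => finSum add (h k)) = finSum add (fun l => finSum add (fun k => h k l)) := by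
  induction n with
  | zero => rfl
  | succ n ih =>
    show add (finSum add fun k => finSum add (h k.castSucc)) (finSum add (h (Fin.last _)))
      = finSum add (fun l => add (finSum add fun k => h k.castSucc l) (h (Fin.last _) l))
    rw [ih, ← finSum_add add hc ha]

end

section
variable {T : Type}

/-- `rCong mul w a b` : `a` and `b` act equally in all contexts ending with `· * w`. -/
def rCong (mul : T → T → T) (w : T) (a b : T) : Prop :=
  mul a w = mul b w ∧ (∀ x, mul (mul a x) w = mul (mul b x) w) ∧
    (∀ y, mul (mul y a) w = mul (mul y b) w) ∧
    ∀ x y, mul (mul (mul y a) x) w = mul (mul (mul y b) x) w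

lemma rCong_isCong (add mul : T → T → T) (hT : IsSemiring add mul) (w : T) :
    IsCong add mul (rCong mul w) := by
  obtain ⟨hc, ha, hm, hl, hr⟩ := hT
  refine ⟨⟨fun a => ⟨rfl, fun _ => rfl, fun _ => rfl, fun _ _ => rfl⟩,
    fun h => ⟨h.1.symm, fun x => (h.2.1 x).symm, fun y => (h.2.2.1 y).symm,
      fun x y => (h.2.2.2 x y).symm⟩,
    fun h h' => ⟨h.1.trans h'.1, fun x => (h.2.1 x).trans (h'.2.1 x),
      fun y => (h.2.2.1 y).trans (h'.2.2.1 y),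
      fun x y => (h.2.2.2 x y).trans (h'.2.2.2 x y)⟩⟩, ?_, ?_⟩
  · rintro a b c d ⟨h1, h2, h3, h4⟩ ⟨g1, g2, g3, g4⟩
    refine ⟨?_, fun x => ?_, fun y => ?_, fun x y => ?_⟩
    · rw [hr, hr, h1, g1]
    · rw [hr, hr, hr, hr, h2, g2]
    · rw [hl, hr, hl, hr, h3, g3]
    · rw [hl, hr, hr, hl, hr, hr, h4, g4]
  · rintro a b c d ⟨h1, h2, h3, h4⟩ ⟨g1, g2, g3, g4⟩
    refine ⟨?_, fun x => ?_, fun y => ?_, fun x y => ?_⟩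
    · have e1 : mul (mul a c) w = mul (mul a d) w := g3 a
      have e2 : mul (mul a d) w = mul (mul b d) w := h2 d
      exact e1.trans e2
    · have e1 : mul (mul (mul a c) x) w = mul (mul (mul a d) x) w := g4 x a
      have e2 : mul (mul (mul a d) x) w = mul (mul (mul b d) x) w := by
        rw [hm a d x, hm b d x]; exact h2 (mul d x)
      exact e1.trans e2
    · have e1 : mul (mul y (mul a c)) w = mul (mul y (mul b c)) w := by
        rw [← hm y a c, ← hm y b c]; exact h4 c y
      have e2 : mul (mul y (mul b c)) w = mul (mul y (mul b d)) w := by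
        rw [← hm y b c, ← hm y b d]; exact g3 (mul y b)
      exact e1.trans e2
    · have e1 : mul (mul (mul y (mul a c)) x) w = mul (mul (mul y (mul b c)) x) w := by
        rw [← hm y a c, ← hm y b c, hm (mul y a) c x, hm (mul y b) c x]
        exact h4 (mul c x) y
      have e2 : mul (mul (mul y (mul b c)) x) w = mul (mul (mul y (mul b d)) x) w := by
        rw [← hm y b c, ← hm y b d]
        exact g4 x (mul y b)
      exact e1.trans e2

/-- Contextual congruence: equal action in all one- and two-sided contexts. -/
def cCong (mul : T → T → T) (a b : T) : Prop :=
  (∀ c, mul c a = mul c b) ∧ (∀ d, mul a d = mul b d) ∧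
    ∀ c d, mul (mul c a) d = mul (mul c b) d

lemma cCong_isCong (add mul : T → T → T) (hT : IsSemiring add mul) :
    IsCong add mul (cCong mul) := by
  obtain ⟨hc, ha, hm, hl, hr⟩ := hT
  refine ⟨⟨fun a => ⟨fun _ => rfl, fun _ => rfl, fun _ _ => rfl⟩,
    fun h => ⟨fun c => (h.1 c).symm, fun d => (h.2.1 d).symm, fun c d => (h.2.2 c d).symm⟩,
    fun h h' => ⟨fun c => (h.1 c).trans (h'.1 c), fun d => (h.2.1 d).trans (h'.2.1 d),
      fun c d => (h.2.2 c d).trans (h'.2.2 c d)⟩⟩, ?_, ?_⟩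
  · rintro a b c d ⟨h1, h2, h3⟩ ⟨g1, g2, g3⟩
    refine ⟨fun e => ?_, fun e => ?_, fun e f => ?_⟩
    · rw [hl, hl, h1, g1]
    · rw [hr, hr, h2, g2]
    · rw [hl, hr, hl, hr, h3, g3]
  · rintro a b c d ⟨h1, h2, h3⟩ ⟨g1, g2, g3⟩
    refine ⟨fun e => ?_, fun e => ?_, fun e f => ?_⟩
    · calc mul e (mul a c) = mul (mul e a) c := (hm _ _ _).symm
        _ = mul (mul e a) d := g1 (mul e a)
        _ = mul (mul e b) d := h3 e d
        _ = mul e (mul b d) := hm _ _ _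
    · calc mul (mul a c) e = mul (mul a d) e := g3 a e
        _ = mul a (mul d e) := hm _ _ _
        _ = mul b (mul d e) := h2 (mul d e)
        _ = mul (mul b d) e := (hm _ _ _).symm
    · calc mul (mul e (mul a c)) f = mul (mul (mul e a) c) f := by rw [← hm e a c]
        _ = mul (mul (mul e a) d) f := g3 (mul e a) f
        _ = mul (mul e a) (mul d f) := hm _ _ _
        _ = mul (mul e b) (mul d f) := h3 e (mul d f)
        _ = mul (mul (mul e b) d) f := (hm _ _ _).symm
        _ = mul (mul e (mul b d)) f := by rw [hm e b d]
end

section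
variable {S : Type} (add mul : S → S → S)

lemma flip_isSemiring (hS : IsSemiring add mul) :
    IsSemiring add (fun a b => mul b a) := by
  obtain ⟨hc, ha, hm, hl, hr⟩ := hS
  exact ⟨hc, ha, fun a b c => (hm c b a).symm, fun a b c => hr b c a, fun a b c => hl c a b⟩

lemma isCong_of_flip {r : S → S → Prop} (h : IsCong add (fun a b => mul b a) r) :
    IsCong add mul r := by
  obtain ⟨he, hadd, hmul⟩ := h
  exact ⟨he, hadd, fun a b c d hab hcd => hmul c d a b hcd hab⟩

lemma mat_isSemiring (hS : IsSemiring add mul) {n : ℕ} :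
    IsSemiring (matAdd add (n := n+1)) (matMul add mul) := by
  obtain ⟨hc, ha, hm, hl, hr⟩ := hS
  refine ⟨?_, ?_, ?_, ?_, ?_⟩
  · intro A B; funext i j; exact hc _ _
  · intro A B C; funext i j; exact ha _ _ _
  · intro A B C; funext i j
    show finSum add (fun k => mul (finSum add fun l => mul (A i l) (B l k)) (C k j))
      = finSum add (fun l => mul (A i l) (finSum add fun k => mul (B l k) (C k j)))
    calc finSum add (fun k => mul (finSum add fun l => mul (A i l) (B l k)) (C k j))
        = finSum add (fun k => finSum add fun l => mul (mul (A i l) (B l k)) (C k j)) :=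
          finSum_congr add fun k => finSum_mul add mul hr _ _
      _ = finSum add (fun l => finSum add fun k => mul (mul (A i l) (B l k)) (C k j)) :=
          finSum_comm add hc ha _
      _ = finSum add (fun l => finSum add fun k => mul (A i l) (mul (B l k) (C k j))) :=
          finSum_congr add fun l => finSum_congr add fun k => hm _ _ _
      _ = finSum add (fun l => mul (A i l) (finSum add fun k => mul (B l k) (C k j))) :=
          finSum_congr add fun l => (mul_finSum add mul hl _ _).symm
  · intro A B C; funext i j
    show finSum add (fun k => mul (A i k) (add (B k j) (C k j)))
      = add (finSum add fun k => mul (A i k) (B k j)) (finSum add fun k => mul (A i k) (C k j))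
    rw [← finSum_add add hc ha]
    exact finSum_congr add fun k => hl _ _ _
  · intro A B C; funext i j
    show finSum add (fun k => mul (add (A i k) (B i k)) (C k j))
      = add (finSum add fun k => mul (A i k) (C k j)) (finSum add fun k => mul (B i k) (C k j))
    rw [← finSum_add add hc ha]
    exact finSum_congr add fun k => hr _ _ _

end

section
variable {S : Type} (add mul : S → S → S) {m : ℕ}

lemma rCong_pair (hS : IsSemiring add mul) (W A B : Fin (m+2) → Fin (m+2) → S)
    (hA : ∀ X, matMul add mul A X = W) (hB : ∀ X, matMul add mul B X = W) :
    rCong (matMul add mul) W A B := by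
  have mm := (mat_isSemiring add mul hS (n := m+1)).2.2.1
  refine ⟨?_, fun x => ?_, fun y => ?_, fun x y => ?_⟩
  · rw [hA, hB]
  · rw [hA x, hB x]
  · rw [mm y A W, mm y B W, hA W, hB W]
  · rw [mm _ x W, mm _ x W, mm y A _, mm y B _, hA, hB]

lemma lCong_pair (hS : IsSemiring add mul) (W A B : Fin (m+2) → Fin (m+2) → S)
    (hA : ∀ X, matMul add mul X A = W) (hB : ∀ X, matMul add mul X B = W) :
    rCong (fun P Q : Fin (m+2) → Fin (m+2) → S => matMul add mul Q P) W A B := by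
  have mm := (mat_isSemiring add mul hS (n := m+1)).2.2.1
  refine ⟨?_, fun x => ?_, fun y => ?_, fun x y => ?_⟩
  · show matMul add mul W A = matMul add mul W B
    rw [hA W, hB W]
  · show matMul add mul W (matMul add mul x A) = matMul add mul W (matMul add mul x B)
    rw [hA x, hB x]
  · show matMul add mul W (matMul add mul A y) = matMul add mul W (matMul add mul B y)
    rw [← mm W A y, ← mm W B y, hA W, hB W]
  · show matMul add mul W (matMul add mul x (matMul add mul A y))
      = matMul add mul W (matMul add mul x (matMul add mul B y))
    rw [← mm x A y, ← mm W _ y, ← mm W x A, hA, ← mm x B y, ← mm W _ y, ← mm W x B, hB]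

end

section
variable {S : Type}

def cst (c : S) {n : ℕ} : Fin n → Fin n → S := fun _ _ => c
def colM (ω s : S) {n : ℕ} : Fin (n+1) → Fin (n+1) → S := fun _ j => if j = 0 then ω else s
def rowM (ω s : S) {n : ℕ} : Fin (n+1) → Fin (n+1) → S := fun i _ => if i = 0 then ω else s
def dgM (ω s : S) {n : ℕ} : Fin n → Fin n → S := fun i j => if i = j then ω else s
def uM (ω s : S) {n : ℕ} : Fin (n+1) → Fin (n+1) → S := fun i j => if i = 0 ∧ j = 0 then s else ω

variable (add mul : S → S → S) {m : ℕ}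

lemma fin_one_ne_zero : (1 : Fin (m+2)) ≠ 0 := by
  refine Fin.ne_of_val_ne ?_
  simp

lemma keyLR (hS : IsSemiring add mul) (hidem : ∀ a : S, add a a = a) (ω : S)
    (hω : ∀ a : S, add a ω = ω)
    (hcs : CongSimple (T := Fin (m + 2) → Fin (m + 2) → S) (matAdd add) (matMul add mul))
    (s : S) (hs : s ≠ ω) (hL : ∀ x : S, mul ω x = ω) : ∀ x : S, mul x ω = ω := by
  have hc := hS.1
  have hSmat := mat_isSemiring add mul hS (n := m+1)
  have hWX : ∀ X, matMul add mul (cst ω) X = (cst ω : Fin (m+2) → Fin (m+2) → S) := by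
    intro X; funext i j
    exact finSum_top add hc ω hω _ 0 (hL (X 0 j))
  have hB1X : ∀ X, matMul add mul (colM ω s) X = (cst ω : Fin (m+2) → Fin (m+2) → S) := by
    intro X; funext i j
    refine finSum_top add hc ω hω _ 0 ?_
    show mul (if (0 : Fin (m+2)) = 0 then ω else s) (X 0 j) = ω
    rw [if_pos rfl]; exact hL _
  have hpair := rCong_pair add mul hS (cst ω) (cst ω) (colM ω s) hWX hB1X
  have hcong := rCong_isCong (matAdd add) (matMul add mul) hSmat (cst ω)
  have hne : (cst ω : Fin (m+2) → Fin (m+2) → S) ≠ colM ω s := by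
    intro hEq
    have h1 := congrFun (congrFun hEq 0) 1
    have h2 : ω = if (1 : Fin (m+2)) = 0 then ω else s := h1
    rw [if_neg (fin_one_ne_zero (m := m))] at h2
    exact hs h2.symm
  rcases hcs.2 _ hcong with he | hall
  · rw [he] at hpair
    exact absurd hpair hne
  · intro x
    have hx : rCong (matMul add mul) (cst ω) (cst x : Fin (m+2) → Fin (m+2) → S)
        (cst ω) := by rw [hall]; trivial
    have heq : matMul add mul (cst x) (cst ω) = (cst ω : Fin (m+2) → Fin (m+2) → S) :=
      hx.1.trans (hWX (cst ω))
    have h00 : finSum add (fun _ : Fin (m+2) => mul x ω) = ω := congrFun (congrFun heq 0) 0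
    rw [finSum_const add hidem] at h00
    exact h00

lemma keyRL (hS : IsSemiring add mul) (hidem : ∀ a : S, add a a = a) (ω : S)
    (hω : ∀ a : S, add a ω = ω)
    (hcs : CongSimple (T := Fin (m + 2) → Fin (m + 2) → S) (matAdd add) (matMul add mul))
    (s : S) (hs : s ≠ ω) (hR : ∀ x : S, mul x ω = ω) : ∀ x : S, mul ω x = ω := by
  have hc := hS.1
  have hSmat := mat_isSemiring add mul hS (n := m+1)
  have hXW : ∀ X, matMul add mul X (cst ω) = (cst ω : Fin (m+2) → Fin (m+2) → S) := by
    intro X; funext i j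
    exact finSum_top add hc ω hω _ 0 (hR (X i 0))
  have hXB1 : ∀ X, matMul add mul X (rowM ω s) = (cst ω : Fin (m+2) → Fin (m+2) → S) := by
    intro X; funext i j
    refine finSum_top add hc ω hω _ 0 ?_
    show mul (X i 0) (if (0 : Fin (m+2)) = 0 then ω else s) = ω
    rw [if_pos rfl]; exact hR _
  have hpair := lCong_pair add mul hS (cst ω) (cst ω) (rowM ω s) hXW hXB1
  have hcong := isCong_of_flip (matAdd add) (matMul add mul)
    (rCong_isCong (matAdd add) (fun a b => matMul add mul b a)
      (flip_isSemiring (matAdd add) (matMul add mul) hSmat) (cst ω))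
  have hne : (cst ω : Fin (m+2) → Fin (m+2) → S) ≠ rowM ω s := by
    intro hEq
    have h1 := congrFun (congrFun hEq 1) 0
    have h2 : ω = if (1 : Fin (m+2)) = 0 then ω else s := h1
    rw [if_neg (fin_one_ne_zero (m := m))] at h2
    exact hs h2.symm
  rcases hcs.2 _ hcong with he | hall
  · rw [he] at hpair
    exact absurd hpair hne
  · intro x
    have hx : rCong (fun a b => matMul add mul b a) (cst ω)
        (cst x : Fin (m+2) → Fin (m+2) → S) (cst ω) := by rw [hall]; trivial
    have heq : matMul add mul (cst ω) (cst x) = (cst ω : Fin (m+2) → Fin (m+2) → S) :=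
      hx.1.trans (hXW (cst ω))
    have h00 : finSum add (fun _ : Fin (m+2) => mul ω x) = ω := congrFun (congrFun heq 0) 0
    rw [finSum_const add hidem] at h00
    exact h00

lemma keyBi (hS : IsSemiring add mul) (hidem : ∀ a : S, add a a = a) (ω : S)
    (hω : ∀ a : S, add a ω = ω)
    (hcs : CongSimple (T := Fin (m + 2) → Fin (m + 2) → S) (matAdd add) (matMul add mul))
    (s : S) (hs : s ≠ ω) (hL : ∀ x : S, mul ω x = ω) (hR : ∀ x : S, mul x ω = ω) :
    False := by
  have hc := hS.1
  have hSmat := mat_isSemiring add mul hS (n := m+1)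
  have hWX : ∀ X, matMul add mul (cst ω) X = (cst ω : Fin (m+2) → Fin (m+2) → S) := by
    intro X; funext i j
    exact finSum_top add hc ω hω _ 0 (hL (X 0 j))
  have hXW : ∀ X, matMul add mul X (cst ω) = (cst ω : Fin (m+2) → Fin (m+2) → S) := by
    intro X; funext i j
    exact finSum_top add hc ω hω _ 0 (hR (X i 0))
  have hXB2 : ∀ X, matMul add mul X (dgM ω s) = (cst ω : Fin (m+2) → Fin (m+2) → S) := by
    intro X; funext i j
    refine finSum_top add hc ω hω _ j ?_
    show mul (X i j) (if (j : Fin (m+2)) = j then ω else s) = ω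
    rw [if_pos rfl]; exact hR _
  have hB2X : ∀ X, matMul add mul (dgM ω s) X = (cst ω : Fin (m+2) → Fin (m+2) → S) := by
    intro X; funext i j
    refine finSum_top add hc ω hω _ i ?_
    show mul (if (i : Fin (m+2)) = i then ω else s) (X i j) = ω
    rw [if_pos rfl]; exact hL _
  have hcong := cCong_isCong (matAdd add) (matMul add mul) hSmat
  have hWB2 : cCong (matMul add mul) (cst ω) (dgM ω s) :=
    ⟨fun c => by rw [hXW c, hXB2 c], fun d => by rw [hWX d, hB2X d],
     fun c d => by rw [hXW c, hXB2 c]⟩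
  have hne : (cst ω : Fin (m+2) → Fin (m+2) → S) ≠ dgM ω s := by
    intro hEq
    have h1 := congrFun (congrFun hEq 0) 1
    have h2 : ω = if (0 : Fin (m+2)) = 1 then ω else s := h1
    rw [if_neg (Ne.symm (fin_one_ne_zero (m := m)))] at h2
    exact hs h2.symm
  rcases hcs.2 _ hcong with he | hall
  · rw [he] at hWB2
    exact absurd hWB2 hne
  · have hconst : ∀ X Y, matMul add mul X Y = (cst ω : Fin (m+2) → Fin (m+2) → S) := by
      intro X Y
      have hx : cCong (matMul add mul) Y (cst ω) := by rw [hall]; trivial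
      rw [hx.1 X]
      exact hXW X
    have hr'cong : IsCong (matAdd add) (matMul add mul)
        (fun A B : Fin (m+2) → Fin (m+2) → S =>
          ∀ p q : Fin (m+2), p ≠ 0 ∨ q ≠ 0 → A p q = B p q) := by
      refine ⟨⟨fun A p q _ => rfl, fun h p q hpq => (h p q hpq).symm,
        fun h h' p q hpq => (h p q hpq).trans (h' p q hpq)⟩, ?_, ?_⟩
      · intro a b c d h1 h2 p q hpq
        show add (a p q) (c p q) = add (b p q) (d p q)
        rw [h1 p q hpq, h2 p q hpq]
      · intro a b c d _ _ p q hpq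
        rw [hconst a c, hconst b d]
    rcases hcs.2 _ hr'cong with he' | hall'
    · have hWU : ∀ p q : Fin (m+2), p ≠ 0 ∨ q ≠ 0 → cst ω p q = uM ω s p q := by
        intro p q hpq
        show ω = if p = 0 ∧ q = 0 then s else ω
        rw [if_neg ?_]
        rintro ⟨rfl, rfl⟩
        rcases hpq with h | h <;> exact h rfl
      have hPQ := congrFun (congrFun he' (cst ω : Fin (m+2) → Fin (m+2) → S)) (uM ω s)
      have hWU' : (cst ω : Fin (m+2) → Fin (m+2) → S) = uM ω s := hPQ ▸ hWU
      have h1 := congrFun (congrFun hWU' 0) 0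
      have h2 : ω = if (0 : Fin (m+2)) = 0 ∧ (0 : Fin (m+2)) = 0 then s else ω := h1
      rw [if_pos ⟨rfl, rfl⟩] at h2
      exact hs h2.symm
    · have hPQ := congrFun (congrFun hall' (cst ω : Fin (m+2) → Fin (m+2) → S)) (cst s)
      have hx : ∀ p q : Fin (m+2), p ≠ 0 ∨ q ≠ 0 →
          (cst ω : Fin (m+2) → Fin (m+2) → S) p q = cst s p q := of_eq_true hPQ
      have h1 : ω = s := hx 0 1 (Or.inr (fin_one_ne_zero (m := m)))
      exact hs h1.symm

end

end Stmt5Aux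

/-- If `M_n(S)` is congruence-simple for some `n ≥ 2`, then the greatest
element `ω` of the additively idempotent `S` is neither left nor right
multiplicatively absorbing. -/
theorem stmt_5 {S : Type} (add mul : S → S → S) (hS : IsSemiring add mul)
    (hidem : ∀ a : S, add a a = a) (ω : S) (hω : ∀ a : S, add a ω = ω)
    (h : ∃ m : ℕ,
      CongSimple (T := Fin (m + 2) → Fin (m + 2) → S) (matAdd add) (matMul add mul)) :
    ¬ (∀ x : S, mul ω x = ω) ∧ ¬ (∀ x : S, mul x ω = ω) := by
  obtain ⟨m, hcs⟩ := h
  obtain ⟨A0, B0, hAB⟩ := hcs.1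
  have hij : ∃ i j, A0 i j ≠ B0 i j := by
    by_contra hno
    push_neg at hno
    exact hAB (funext fun i => funext fun j => hno i j)
  obtain ⟨i, j, hije⟩ := hij
  have hsex : ∃ s : S, s ≠ ω := by
    by_cases hA : A0 i j = ω
    · exact ⟨B0 i j, fun hB => hije (by rw [hA, hB])⟩
    · exact ⟨A0 i j, hA⟩
  obtain ⟨s, hs⟩ := hsex
  constructor
  · intro hL
    exact Stmt5Aux.keyBi add mul hS hidem ω hω hcs s hs hL
      (Stmt5Aux.keyLR add mul hS hidem ω hω hcs s hs hL)
  · intro hR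
    exact Stmt5Aux.keyBi add mul hS hidem ω hω hcs s hs
      (Stmt5Aux.keyRL add mul hS hidem ω hω hcs s hs hR) hR
end

section
/- Let S be an additively idempotent semiring with a zero element 0 and a unity 1, and let n ≥ 2. Then M_n(S) is subdirectly irreducible if and only if S is subdirectly irreducible. -/
/-!
Congruences of `S` and of `M_n(S)` correspond by an order isomorphism: a congruence `r` on `S`
gives the entrywise congruence on matrices, and a congruence `R` on matrices is recovered from its
restriction to the corner `a ↦ a E₀₀`. Indeed, the identity `E_{ki} A E_{jl} = A_{ij} E_{kl}` for
matrix units moves any entry of a matrix into any cell, and a matrix is the sum of its entries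
placed in their cells. Since the identity is the least congruence on both sides, the
isomorphism matches least non-identity congruences, i.e. the monoliths.
-/

section CongruenceCorrespondence

variable {T T' : Type} {add mul : T → T → T} {add' mul' : T' → T' → T'}

theorem isCong_eq (add mul : T → T → T) : IsCong add mul (· = ·) :=
  ⟨eq_equivalence, fun _ _ _ _ hab hcd => hab ▸ hcd ▸ rfl,
    fun _ _ _ _ hab hcd => hab ▸ hcd ▸ rfl⟩

theorem IsCong.eq_le {r : T → T → Prop} (hr : IsCong add mul r) : (· = ·) ≤ r := by
  rintro a _ rfl
  exact hr.1.refl a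

structure IsCongCorrespondence (add mul : T → T → T) (add' mul' : T' → T' → T')
    (Φ : (T → T → Prop) → T' → T' → Prop) (Ψ : (T' → T' → Prop) → T → T → Prop) : Prop where
  isCong_map : ∀ r, IsCong add mul r → IsCong add' mul' (Φ r)
  isCong_comap : ∀ R, IsCong add' mul' R → IsCong add mul (Ψ R)
  monotone_map : Monotone Φ
  monotone_comap : Monotone Ψ
  comap_map : ∀ r, IsCong add mul r → Ψ (Φ r) = r
  map_comap : ∀ R, IsCong add' mul' R → Φ (Ψ R) = R

namespace IsCongCorrespondence

variable {Φ : (T → T → Prop) → T' → T' → Prop} {Ψ : (T' → T' → Prop) → T → T → Prop}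

theorem symm (h : IsCongCorrespondence add mul add' mul' Φ Ψ) :
    IsCongCorrespondence add' mul' add mul Ψ Φ :=
  ⟨h.isCong_comap, h.isCong_map, h.monotone_comap, h.monotone_map, h.map_comap, h.comap_map⟩

theorem map_ne_eq (h : IsCongCorrespondence add mul add' mul' Φ Ψ) {r : T → T → Prop}
    (hr : IsCong add mul r) (hne : r ≠ (· = ·)) : Φ r ≠ (· = ·) := by
  intro hΦr
  have hΦr_le : Φ r ≤ Φ (· = ·) := hΦr ▸ (h.isCong_map _ (isCong_eq add mul)).eq_le
  have hr_le : r ≤ (· = ·) := by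
    simpa only [h.comap_map _ hr, h.comap_map _ (isCong_eq add mul)] using
      h.monotone_comap hΦr_le
  exact hne (le_antisymm hr_le hr.eq_le)

theorem subIrr_of_subIrr (h : IsCongCorrespondence add mul add' mul' Φ Ψ)
    (hT' : SubIrr add' mul') : SubIrr add mul := by
  obtain ⟨R, hR, hRne, hRmin⟩ := hT'
  refine ⟨Ψ R, h.isCong_comap R hR, h.symm.map_ne_eq hR hRne, fun s hs hsne => ?_⟩
  have hRle : R ≤ Φ s := hRmin _ (h.isCong_map s hs) (h.map_ne_eq hs hsne)
  exact (h.comap_map s hs ▸ h.monotone_comap hRle : Ψ R ≤ s)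

theorem subIrr_iff (h : IsCongCorrespondence add mul add' mul' Φ Ψ) :
    SubIrr add mul ↔ SubIrr add' mul' :=
  ⟨h.symm.subIrr_of_subIrr, h.subIrr_of_subIrr⟩

end IsCongCorrespondence

end CongruenceCorrespondence

section FinSum

variable {S : Type} {add : S → S → S}

theorem finSum_rel {r : S → S → Prop}
    (hr : ∀ a b c d, r a b → r c d → r (add a c) (add b d)) :
    ∀ {n : ℕ} (f g : Fin (n + 1) → S), (∀ k, r (f k) (g k)) → r (finSum add f) (finSum add g)
  | 0, _, _, hfg => hfg 0
  | _ + 1, _, _, hfg =>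
    hr _ _ _ _ (finSum_rel hr _ _ fun k => hfg k.castSucc) (hfg (Fin.last _))

theorem finSum_eq_zero {z : S} (hz : ∀ x, add z x = x) :
    ∀ {n : ℕ} (f : Fin (n + 1) → S), (∀ k, f k = z) → finSum add f = z
  | 0, _, hf => hf 0
  | _ + 1, f, hf => by
    show add (finSum add fun k => f k.castSucc) (f (Fin.last _)) = z
    rw [finSum_eq_zero hz _ fun k => hf k.castSucc, hf, hz]

theorem finSum_eq_single {z : S} (hcomm : ∀ a b, add a b = add b a) (hz : ∀ x, add z x = x) :
    ∀ {n : ℕ} (f : Fin (n + 1) → S) (k₀ : Fin (n + 1)),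
      (∀ k, k ≠ k₀ → f k = z) → finSum add f = f k₀
  | 0, f, k₀, _ => congrArg f (Fin.fin_one_eq_zero k₀).symm
  | n + 1, f, k₀, hf => by
    show add (finSum add fun k => f k.castSucc) (f (Fin.last _)) = f k₀
    by_cases hk₀ : k₀ = Fin.last (n + 1)
    · subst hk₀
      rw [finSum_eq_zero hz _ fun k => hf _ (Fin.castSucc_lt_last k).ne, hz]
    · obtain ⟨k₁, rfl⟩ := Fin.exists_castSucc_eq.mpr hk₀
      rw [finSum_eq_single hcomm hz _ k₁ fun k hk => hf _ (Fin.castSucc_injective _ |>.ne hk),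
        hf _ (Ne.symm hk₀), hcomm, hz]

theorem finSum_matAdd_apply :
    ∀ {n N : ℕ} (F : Fin (n + 1) → Fin N → Fin N → S) (p q : Fin N),
      finSum (matAdd add) F p q = finSum add fun k => F k p q
  | 0, _, _, _, _ => rfl
  | _ + 1, _, F, p, q => congrArg (add · (F (Fin.last _) p q)) (finSum_matAdd_apply _ p q)

end FinSum

section MatrixUnits

variable {S : Type} {add mul : S → S → S} {z : S}

theorem IsZero.zero_mul (hz : IsZero add mul z) (x : S) : mul z x = z := (hz x).1

theorem IsZero.mul_zero (hz : IsZero add mul z) (x : S) : mul x z = z := (hz x).2.1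

theorem IsZero.zero_add (hz : IsZero add mul z) (x : S) : add z x = x := (hz x).2.2

def matSingle (z : S) {N : ℕ} (i j : Fin N) (a : S) : Fin N → Fin N → S :=
  fun p q => if p = i ∧ q = j then a else z

theorem matSingle_apply_self {N : ℕ} (i j : Fin N) (a : S) : matSingle z i j a i j = a :=
  if_pos ⟨rfl, rfl⟩

theorem matSingle_add (hz : ∀ x, add z x = x) {N : ℕ} (i j : Fin N) (a b : S) :
    matSingle z i j (add a b) = matAdd add (matSingle z i j a) (matSingle z i j b) := by
  funext p q
  by_cases h : p = i ∧ q = j <;> simp [matSingle, matAdd, h, hz]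

theorem matMul_matSingle_matSingle (hcomm : ∀ a b, add a b = add b a) (hz : IsZero add mul z)
    {N : ℕ} (i k j : Fin (N + 1)) (a b : S) :
    matMul add mul (matSingle z i k a) (matSingle z k j b) = matSingle z i j (mul a b) := by
  funext p q
  show finSum add (fun t => mul (matSingle z i k a p t) (matSingle z k j b t q)) = _
  rw [finSum_eq_single hcomm hz.zero_add _ k fun t ht => by simp [matSingle, ht, hz.zero_mul]]
  by_cases hp : p = i <;> by_cases hq : q = j <;>
    simp [matSingle, hp, hq, hz.zero_mul, hz.mul_zero]

theorem matMul_matSingle_right (hcomm : ∀ a b, add a b = add b a) (hz : IsZero add mul z)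
    {u : S} (hu : ∀ x, mul x u = x) {N : ℕ} (j l : Fin (N + 1))
    (A : Fin (N + 1) → Fin (N + 1) → S) :
    matMul add mul A (matSingle z j l u) = fun p q => if q = l then A p j else z := by
  funext p q
  show finSum add (fun t => mul (A p t) (matSingle z j l u t q)) = _
  rw [finSum_eq_single hcomm hz.zero_add _ j fun t ht => by simp [matSingle, ht, hz.mul_zero]]
  by_cases hq : q = l <;> simp [matSingle, hq, hu, hz.mul_zero]

theorem matMul_matSingle_left (hcomm : ∀ a b, add a b = add b a) (hz : IsZero add mul z)
    {u : S} (hu : ∀ x, mul u x = x) {N : ℕ} (l i : Fin (N + 1))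
    (B : Fin (N + 1) → Fin (N + 1) → S) :
    matMul add mul (matSingle z l i u) B = fun p q => if p = l then B i q else z := by
  funext p q
  show finSum add (fun t => mul (matSingle z l i u p t) (B t q)) = _
  rw [finSum_eq_single hcomm hz.zero_add _ i fun t ht => by simp [matSingle, ht, hz.zero_mul]]
  by_cases hp : p = l <;> simp [matSingle, hp, hu, hz.zero_mul]

theorem finSum_finSum_matSingle (hcomm : ∀ a b, add a b = add b a) (hz : ∀ x, add z x = x)
    {N : ℕ} (A : Fin (N + 1) → Fin (N + 1) → S) :
    finSum (matAdd add) (fun i => finSum (matAdd add) fun j => matSingle z i j (A i j)) = A := by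
  funext p q
  simp only [finSum_matAdd_apply]
  rw [finSum_eq_single hcomm hz _ p fun i hi =>
      finSum_eq_zero hz _ fun j => by simp [matSingle, Ne.symm hi],
    finSum_eq_single hcomm hz _ q fun j hj => by simp [matSingle, Ne.symm hj]]
  simp [matSingle]

end MatrixUnits

section MatrixCongruences

variable {S : Type} {add mul : S → S → S} {z u : S}

theorem matMul_matSingle_unit_conj (hcomm : ∀ a b, add a b = add b a) (hz : IsZero add mul z)
    (hu : ∀ x, mul u x = x ∧ mul x u = x) {N : ℕ} (k i j l : Fin (N + 1))
    (A : Fin (N + 1) → Fin (N + 1) → S) :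
    matMul add mul (matSingle z k i u) (matMul add mul A (matSingle z j l u)) =
      matSingle z k l (A i j) := by
  rw [matMul_matSingle_right hcomm hz (fun x => (hu x).2),
    matMul_matSingle_left hcomm hz (fun x => (hu x).1)]
  funext p q
  by_cases hp : p = k <;> by_cases hq : q = l <;> simp [matSingle, hp, hq]

def entrywise {N : ℕ} (r : S → S → Prop) (A B : Fin N → Fin N → S) : Prop :=
  ∀ i j, r (A i j) (B i j)

def corner (z : S) {N : ℕ}
    (R : (Fin (N + 1) → Fin (N + 1) → S) → (Fin (N + 1) → Fin (N + 1) → S) → Prop)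
    (a b : S) : Prop :=
  R (matSingle z 0 0 a) (matSingle z 0 0 b)

theorem IsCong.entrywise {r : S → S → Prop} (hr : IsCong add mul r) {N : ℕ} :
    IsCong (matAdd add) (matMul add mul) (entrywise (N := N + 1) r) := by
  obtain ⟨hequiv, hadd, hmul⟩ := hr
  refine ⟨⟨fun A i j => hequiv.refl _, fun h i j => hequiv.symm (h i j),
    fun h₁ h₂ i j => hequiv.trans (h₁ i j) (h₂ i j)⟩, ?_, ?_⟩
  · exact fun _ _ _ _ h₁ h₂ i j => hadd _ _ _ _ (h₁ i j) (h₂ i j)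
  · exact fun _ _ _ _ h₁ h₂ i j =>
      finSum_rel hadd _ _ fun k => hmul _ _ _ _ (h₁ i k) (h₂ k j)

theorem IsCong.corner (hcomm : ∀ a b, add a b = add b a) (hz : IsZero add mul z) {N : ℕ}
    {R : (Fin (N + 1) → Fin (N + 1) → S) → (Fin (N + 1) → Fin (N + 1) → S) → Prop}
    (hR : IsCong (matAdd add) (matMul add mul) R) : IsCong add mul (corner z R) := by
  obtain ⟨hequiv, hadd, hmul⟩ := hR
  refine ⟨⟨fun a => hequiv.refl _, hequiv.symm, hequiv.trans⟩, ?_, ?_⟩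
  · intro a b c d hab hcd
    show R (matSingle z 0 0 (add a c)) (matSingle z 0 0 (add b d))
    rw [matSingle_add hz.zero_add, matSingle_add hz.zero_add]
    exact hadd _ _ _ _ hab hcd
  · intro a b c d hab hcd
    show R (matSingle z 0 0 (mul a c)) (matSingle z 0 0 (mul b d))
    rw [← matMul_matSingle_matSingle hcomm hz, ← matMul_matSingle_matSingle hcomm hz]
    exact hmul _ _ _ _ hab hcd

theorem corner_entrywise {r : S → S → Prop} (hr : IsCong add mul r) {N : ℕ} :
    corner z (entrywise (N := N + 1) r) = r := by
  funext a b
  refine propext ⟨fun h => by simpa [matSingle] using h 0 0, fun h i j => ?_⟩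
  by_cases hij : i = 0 ∧ j = 0
  · simpa [matSingle, hij] using h
  · simpa [matSingle, hij] using hr.1.refl z

theorem entrywise_corner (hcomm : ∀ a b, add a b = add b a) (hz : IsZero add mul z)
    (hu : ∀ x, mul u x = x ∧ mul x u = x) {N : ℕ}
    {R : (Fin (N + 1) → Fin (N + 1) → S) → (Fin (N + 1) → Fin (N + 1) → S) → Prop}
    (hR : IsCong (matAdd add) (matMul add mul) R) : entrywise (corner z R) = R := by
  obtain ⟨hequiv, hadd, hmul⟩ := hR
  funext A B
  refine propext ⟨fun h => ?_, fun h i j => ?_⟩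
  · have hcells : ∀ i j, R (matSingle z i j (A i j)) (matSingle z i j (B i j)) := fun i j => by
      simpa only [matMul_matSingle_unit_conj hcomm hz hu, matSingle_apply_self] using
        hmul _ _ _ _ (hequiv.refl (matSingle z i 0 u))
          (hmul _ _ _ _ (h i j) (hequiv.refl (matSingle z 0 j u)))
    rw [← finSum_finSum_matSingle hcomm hz.zero_add A,
      ← finSum_finSum_matSingle hcomm hz.zero_add B]
    exact finSum_rel hadd _ _ fun i => finSum_rel hadd _ _ fun j => hcells i j
  · show R (matSingle z 0 0 (A i j)) (matSingle z 0 0 (B i j))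
    simpa only [matMul_matSingle_unit_conj hcomm hz hu] using
      hmul _ _ _ _ (hequiv.refl (matSingle z 0 i u))
        (hmul _ _ _ _ h (hequiv.refl (matSingle z j 0 u)))

theorem isCongCorrespondence_entrywise_corner (hcomm : ∀ a b, add a b = add b a)
    (hz : IsZero add mul z) (hu : ∀ x, mul u x = x ∧ mul x u = x) (N : ℕ) :
    IsCongCorrespondence add mul (matAdd add) (matMul add mul)
      (entrywise (N := N + 1)) (corner z) where
  isCong_map _ hr := hr.entrywise
  isCong_comap _ hR := hR.corner hcomm hz
  monotone_map _ _ hrs _ _ h i j := hrs _ _ (h i j)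
  monotone_comap _ _ hRS _ _ h := hRS _ _ h
  comap_map _ hr := corner_entrywise hr
  map_comap _ hR := entrywise_corner hcomm hz hu hR

end MatrixCongruences

theorem stmt_6_general {S : Type} (add mul : S → S → S) (hS : IsSemiring add mul)
    (z : S) (hz : IsZero add mul z)
    (u : S) (hu : ∀ x : S, mul u x = x ∧ mul x u = x) :
    ∀ m : ℕ,
      (SubIrr (T := Fin (m + 2) → Fin (m + 2) → S) (matAdd add) (matMul add mul) ↔
        SubIrr add mul) :=
  fun m => (isCongCorrespondence_entrywise_corner hS.1 hz hu (m + 1)).subIrr_iff.symm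

/-- For an additively idempotent semiring with zero and unity, `M_n(S)` is
subdirectly irreducible iff `S` is, for any `n ≥ 2`. -/
theorem stmt_6 {S : Type} (add mul : S → S → S) (hS : IsSemiring add mul)
    (hidem : ∀ a : S, add a a = a)
    (z : S) (hz : IsZero add mul z)
    (u : S) (hu : ∀ x : S, mul u x = x ∧ mul x u = x) :
    ∀ m : ℕ,
      (SubIrr (T := Fin (m + 2) → Fin (m + 2) → S) (matAdd add) (matMul add mul) ↔
        SubIrr add mul) :=
  stmt_6_general add mul hS z hz u hu
end

section
/- Let S be a subsemiring of the max-plus semiring ℝ(max, +) such that S contains a positive real and a negative real. Then for every n ≥ 2, the matrix semiring M_n(S) is congruence-simple. -/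
section
variable {S : Type} {f : S → ℝ} {add mul : S → S → S}

theorem le_finSum (hadd : ∀ a b : S, f (add a b) = max (f a) (f b)) :
    ∀ {n : ℕ} (g : Fin (n + 1) → S) (i : Fin (n + 1)), f (g i) ≤ f (finSum add g) := by
  intro n
  induction n with
  | zero =>
      intro g i
      rw [Fin.fin_one_eq_zero i]
      exact le_of_eq rfl
  | succ n ih =>
      intro g i
      have hrw : finSum add g = add (finSum add fun i => g i.castSucc) (g (Fin.last _)) := rfl
      rw [hrw, hadd]
      induction i using Fin.lastCases with
      | last => exact le_max_right _ _
      | cast i => exact le_trans (ih (fun i => g i.castSucc) i) (le_max_left _ _)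

theorem finSum_le (hadd : ∀ a b : S, f (add a b) = max (f a) (f b)) :
    ∀ {n : ℕ} (g : Fin (n + 1) → S) (c : ℝ), (∀ i, f (g i) ≤ c) → f (finSum add g) ≤ c := by
  intro n
  induction n with
  | zero => intro g c h; exact h 0
  | succ n ih =>
      intro g c h
      have hrw : finSum add g = add (finSum add fun i => g i.castSucc) (g (Fin.last _)) := rfl
      rw [hrw, hadd]
      exact max_le (ih _ c fun i => h _) (h _)

theorem le_matMul (hadd : ∀ a b : S, f (add a b) = max (f a) (f b)) {n : ℕ}
    (A B : Fin (n + 1) → Fin (n + 1) → S) (i j k : Fin (n + 1)) :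
    f (mul (A i k) (B k j)) ≤ f (matMul add mul A B i j) :=
  le_finSum hadd (fun k => mul (A i k) (B k j)) k

theorem matMul_le (hadd : ∀ a b : S, f (add a b) = max (f a) (f b)) {n : ℕ}
    (A B : Fin (n + 1) → Fin (n + 1) → S) (i j : Fin (n + 1)) (c : ℝ)
    (h : ∀ k, f (mul (A i k) (B k j)) ≤ c) :
    f (matMul add mul A B i j) ≤ c :=
  finSum_le hadd (fun k => mul (A i k) (B k j)) c h

end

def Pm {S : Type} (u z : S) {n : ℕ} (k i : Fin (n + 1)) : Fin (n + 1) → Fin (n + 1) → S :=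
  fun s t => if s = k ∧ t = i then u else z

section
variable {S : Type} {f : S → ℝ} {add mul : S → S → S}

theorem proj (hadd : ∀ a b : S, f (add a b) = max (f a) (f b))
    (hmul : ∀ a b : S, f (mul a b) = f a + f b) {n : ℕ}
    (X : Fin (n + 1) → Fin (n + 1) → S) (k l i j : Fin (n + 1))
    (u v z : S) (c : ℝ) (hc : ∀ s t, f (X s t) ≤ c) (hzu : f z ≤ f u) (hzv : f z ≤ f v) :
    (f u + f (X i j) + f v ≤
        f (matMul add mul (matMul add mul (Pm u z k i) X) (Pm v z j l) k l)) ∧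
    (f (matMul add mul (matMul add mul (Pm u z k i) X) (Pm v z j l) k l) ≤
        max (f u + f (X i j) + f v) (f z + c + max (f u) (f v))) ∧
    ∀ s t, ¬(s = k ∧ t = l) →
        f (matMul add mul (matMul add mul (Pm u z k i) X) (Pm v z j l) s t) ≤
          f z + c + max (f u) (f v) := by
  set P : Fin (n+1) → Fin (n+1) → S := Pm u z k i with hP
  set Q : Fin (n+1) → Fin (n+1) → S := Pm v z j l with hQ
  set PX : Fin (n+1) → Fin (n+1) → S := matMul add mul P X with hPX
  have hPki : P k i = u := by simp [hP, Pm]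
  have hQjl : Q j l = v := by simp [hQ, Pm]
  have hPle : ∀ s x, f (P s x) ≤ f u := by
    intro s x; simp only [hP, Pm]; split_ifs; exact le_rfl; exact hzu
  have hQle : ∀ y t, f (Q y t) ≤ f v := by
    intro y t; simp only [hQ, Pm]; split_ifs; exact le_rfl; exact hzv
  have sub1 : ∀ y, f u + f (X i y) ≤ f (PX k y) := by
    intro y
    have h := le_matMul (mul := mul) hadd P X k y i
    rw [hmul, hPki] at h
    exact h
  have sub4 : ∀ y, f (PX k y) ≤ max (f u + f (X i y)) (f z + c) := by
    intro y
    apply matMul_le hadd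
    intro x
    rw [hmul]
    by_cases hx : x = i
    · subst hx; rw [hPki]; exact le_max_of_le_left (by linarith [hc x y])
    · have : P k x = z := by simp [hP, Pm, hx]
      rw [this]; exact le_max_of_le_right (by linarith [hc x y])
  have sub3 : ∀ s y, s ≠ k → f (PX s y) ≤ f z + c := by
    intro s y hs
    apply matMul_le hadd
    intro x
    rw [hmul]
    have : P s x = z := by simp [hP, Pm, hs]
    rw [this]
    linarith [hc x y]
  have sub2 : ∀ s y, f (PX s y) ≤ f u + c := by
    intro s y
    apply matMul_le hadd
    intro x
    rw [hmul]
    linarith [hPle s x, hc x y]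
  refine ⟨?_, ?_, ?_⟩
  · have h := le_matMul (mul := mul) hadd PX Q k l j
    rw [hmul, hQjl] at h
    linarith [sub1 j]
  · apply matMul_le hadd
    intro y
    rw [hmul]
    by_cases hy : y = j
    · subst hy
      rw [hQjl]
      rcases le_max_iff.mp (sub4 y) with h | h
      · exact le_max_of_le_left (by linarith)
      · exact le_max_of_le_right (by linarith [le_max_right (f u) (f v)])
    · have : Q y l = z := by simp [hQ, Pm, hy]
      rw [this]
      exact le_max_of_le_right (by linarith [sub2 k y, le_max_left (f u) (f v)])
  · intro s t hst
    apply matMul_le hadd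
    intro y
    rw [hmul]
    by_cases hs : s = k
    · subst hs
      have ht : t ≠ l := fun h => hst ⟨rfl, h⟩
      have : Q y t = z := by simp [hQ, Pm, ht]
      rw [this]
      linarith [sub2 s y, le_max_left (f u) (f v)]
    · linarith [sub3 s y hs, hQle y t, le_max_right (f u) (f v)]

def mpow {S : Type} (add mul : S → S → S) {n : ℕ} (C : Fin (n + 1) → Fin (n + 1) → S) :
    ℕ → (Fin (n + 1) → Fin (n + 1) → S)
  | 0 => C
  | m + 1 => matMul add mul (mpow add mul C m) C

def spow {S : Type} (mul : S → S → S) (x : S) : ℕ → S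
  | 0 => x
  | m + 1 => mul x (spow mul x m)

section
variable {S : Type} {f : S → ℝ} {add mul : S → S → S}

theorem spow_spec (hmul : ∀ a b : S, f (mul a b) = f a + f b) (x : S) :
    ∀ m : ℕ, f (spow mul x m) = (m + 1) * f x := by
  intro m
  induction m with
  | zero => simp [spow]
  | succ m ih => rw [show spow mul x (m+1) = mul x (spow mul x m) from rfl, hmul, ih]; push_cast; ring

theorem mpow_spec (hadd : ∀ a b : S, f (add a b) = max (f a) (f b))
    (hmul : ∀ a b : S, f (mul a b) = f a + f b) {n : ℕ}
    (C : Fin (n + 1) → Fin (n + 1) → S) (c0 : ℝ)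
    (h00 : f (C 0 0) = c0) (hall : ∀ s t, f (C s t) ≤ c0) :
    ∀ m : ℕ, f (mpow add mul C m 0 0) = (m + 1) * c0 ∧
      ∀ s t, f (mpow add mul C m s t) ≤ (m + 1) * c0 := by
  intro m
  induction m with
  | zero =>
      constructor
      · rw [show mpow add mul C 0 = C from rfl, h00]; norm_num
      · intro s t; rw [show mpow add mul C 0 = C from rfl]
        push_cast
        linarith [hall s t]
  | succ m ih =>
      have hrw : mpow add mul C (m + 1) = matMul add mul (mpow add mul C m) C := rfl
      have hc : ((m : ℝ) + 1 + 1) * c0 = ((m : ℝ) + 1) * c0 + c0 := by ring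
      constructor
      · rw [hrw]
        apply le_antisymm
        · apply matMul_le hadd
          intro y
          rw [hmul]
          push_cast
          rw [hc]
          exact add_le_add (ih.2 0 y) (hall y 0)
        · have h := le_matMul (mul := mul) hadd (mpow add mul C m) C 0 0 0
          rw [hmul, ih.1, h00] at h
          push_cast
          linarith
      · intro s t
        rw [hrw]
        apply matMul_le hadd
        intro y
        rw [hmul]
        push_cast
        rw [hc]
        exact add_le_add (ih.2 s y) (hall y t)

theorem mpow_rel {n : ℕ} {r : (Fin (n+1) → Fin (n+1) → S) → (Fin (n+1) → Fin (n+1) → S) → Prop}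
    (hmulc : ∀ a b c d, r a b → r c d → r (matMul add mul a c) (matMul add mul b d))
    {C D : Fin (n+1) → Fin (n+1) → S} (hCD : r C D) :
    ∀ m : ℕ, r (mpow add mul C m) (mpow add mul D m) := by
  intro m
  induction m with
  | zero => exact hCD
  | succ m ih => exact hmulc _ _ _ _ ih hCD

theorem ent_hi {n : ℕ} (X : Fin (n + 1) → Fin (n + 1) → S) :
    ∃ hi : ℝ, ∀ s t, f (X s t) ≤ hi := by
  obtain ⟨p, hp⟩ := Finite.exists_max (fun p : Fin (n + 1) × Fin (n + 1) => f (X p.1 p.2))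
  exact ⟨f (X p.1 p.2), fun s t => hp (s, t)⟩

theorem ent_lo {n : ℕ} (X : Fin (n + 1) → Fin (n + 1) → S) :
    ∃ lo : ℝ, ∀ s t, lo ≤ f (X s t) := by
  obtain ⟨p, hp⟩ := Finite.exists_min (fun p : Fin (n + 1) × Fin (n + 1) => f (X p.1 p.2))
  exact ⟨f (X p.1 p.2), fun s t => hp (s, t)⟩

theorem exists_small (hmul : ∀ a b : S, f (mul a b) = f a + f b)
    {q : S} (hq : f q < 0) (R : ℝ) : ∃ z : S, f z ≤ R := by
  obtain ⟨m, hm⟩ := exists_nat_ge (R / f q)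
  refine ⟨spow mul q m, ?_⟩
  rw [spow_spec hmul]
  have h1 : R / f q ≤ (m : ℝ) + 1 := by linarith
  have := mul_le_mul_of_nonpos_right h1 (le_of_lt hq)
  rw [div_mul_cancel₀ R (ne_of_lt hq)] at this
  linarith

end

theorem dense_step {α γ : ℝ} (hα : 0 < α) (hγ : γ < 0) (cstar w : ℝ) :
    ∃ i j : ℕ, w ≤ ((i:ℝ)+1)*α + ((j:ℝ)+1)*γ + cstar ∧
      ((i:ℝ)+1)*α + ((j:ℝ)+1)*γ + cstar < w + α := by
  classical
  obtain ⟨j, hj⟩ : ∃ j : ℕ, ((j:ℝ)+1)*γ ≤ w - cstar - α := by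
    obtain ⟨j, hj⟩ := exists_nat_ge ((w - cstar - α) / γ)
    refine ⟨j, ?_⟩
    have h1 : (w - cstar - α)/γ ≤ (j:ℝ)+1 := by linarith
    have h2 := mul_le_mul_of_nonpos_right h1 (le_of_lt hγ)
    rw [div_mul_cancel₀ _ (ne_of_lt hγ)] at h2
    linarith
  have hex : ∃ i : ℕ, w ≤ ((i:ℝ)+1)*α + ((j:ℝ)+1)*γ + cstar := by
    obtain ⟨i, hi⟩ := exists_nat_ge ((w - ((j:ℝ)+1)*γ - cstar)/α)
    refine ⟨i, ?_⟩
    have h1 := (div_le_iff₀ hα).mp hi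
    nlinarith
  refine ⟨Nat.find hex, j, Nat.find_spec hex, ?_⟩
  rcases Nat.eq_zero_or_pos (Nat.find hex) with h0 | hp
  · rw [h0]; push_cast; linarith
  · have hm := Nat.find_min hex (Nat.sub_lt hp one_pos)
    push_neg at hm
    have hcast : ((Nat.find hex - 1 : ℕ) : ℝ) = (Nat.find hex : ℝ) - 1 := by
      rw [Nat.cast_sub hp]; norm_num
    rw [hcast] at hm
    linarith



def hv (α γ cstar : ℝ) (i j : ℕ) : ℝ := ((i:ℝ)+1)*α + ((j:ℝ)+1)*γ + cstar

section
variable {S : Type} {f : S → ℝ} {add mul : S → S → S}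

theorem climb (hinj : Function.Injective f)
    (hadd : ∀ a b : S, f (add a b) = max (f a) (f b))
    {n : ℕ} {r : (Fin (n+1) → Fin (n+1) → S) → (Fin (n+1) → Fin (n+1) → S) → Prop}
    (hr : IsCong (matAdd add) (matMul add mul) r)
    (α γ Δ cstar : ℝ) (hα : 0 < α) (hγ : γ < 0) (hΔ : α + 1 ≤ Δ)
    (key : ∀ (k l : Fin (n+1)) (i j : ℕ) (β : ℝ),
      ∃ G G' : Fin (n+1) → Fin (n+1) → S,
       r G G' ∧ f (G k l) ≤ hv α γ cstar i j ∧ f (G' k l) = hv α γ cstar i j + Δ ∧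
       (∀ s t, ¬(s = k ∧ t = l) → f (G s t) ≤ β) ∧
       (∀ s t, ¬(s = k ∧ t = l) → f (G' s t) ≤ β))
    (k l : Fin (n+1)) (istar jstar : ℕ) :
    ∀ (fuel : ℕ) (X : Fin (n+1) → Fin (n+1) → S),
      (∀ s t, f (X s t) ≤ hv α γ cstar istar jstar + Δ) →
      (hv α γ cstar istar jstar - f (X k l) ≤ (fuel : ℝ)) →
      ∃ X', r X X' ∧ f (X' k l) = hv α γ cstar istar jstar + Δ ∧
        (∀ s t, ¬(s = k ∧ t = l) → X' s t = X s t) ∧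
        ∀ s t, f (X' s t) ≤ hv α γ cstar istar jstar + Δ := by
  have raise : ∀ (X : Fin (n+1) → Fin (n+1) → S) (i j : ℕ),
      hv α γ cstar i j ≤ f (X k l) →
      ∃ X', r X X' ∧ f (X' k l) = max (f (X k l)) (hv α γ cstar i j + Δ) ∧
        ∀ s t, ¬(s = k ∧ t = l) → X' s t = X s t := by
    intro X i j hle
    obtain ⟨lo, hlo⟩ := ent_lo (f := f) X
    obtain ⟨G, G', hGG', hGkl, hG'kl, hGj, hG'j⟩ := key k l i j (min lo (f (X k l)))
    have hXG : matAdd add X G = X := by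
      funext s t
      apply hinj
      rw [show matAdd add X G s t = add (X s t) (G s t) from rfl, hadd]
      apply max_eq_left
      by_cases hst : s = k ∧ t = l
      · rcases hst with ⟨rfl, rfl⟩
        exact le_trans hGkl hle
      · exact le_trans (hGj s t hst) (le_trans (min_le_left _ _) (hlo s t))
    refine ⟨matAdd add X G', ?_, ?_, ?_⟩
    · have h := hr.2.1 X X G G' (hr.1.refl X) hGG'
      rwa [hXG] at h
    · rw [show matAdd add X G' k l = add (X k l) (G' k l) from rfl, hadd, hG'kl]
    · intro s t hst
      apply hinj
      rw [show matAdd add X G' s t = add (X s t) (G' s t) from rfl, hadd]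
      exact max_eq_left (le_trans (hG'j s t hst) (le_trans (min_le_left _ _) (hlo s t)))
  have finish : ∀ (X : Fin (n+1) → Fin (n+1) → S),
      (∀ s t, f (X s t) ≤ hv α γ cstar istar jstar + Δ) →
      hv α γ cstar istar jstar ≤ f (X k l) →
      ∃ X', r X X' ∧ f (X' k l) = hv α γ cstar istar jstar + Δ ∧
        (∀ s t, ¬(s = k ∧ t = l) → X' s t = X s t) ∧
        ∀ s t, f (X' s t) ≤ hv α γ cstar istar jstar + Δ := by
    intro X hXM hge
    obtain ⟨X', h1, h2, h3⟩ := raise X istar jstar hge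
    have h2' : f (X' k l) = hv α γ cstar istar jstar + Δ := by
      rw [h2]; exact max_eq_right (hXM k l)
    refine ⟨X', h1, h2', h3, ?_⟩
    intro s t
    by_cases hst : s = k ∧ t = l
    · rcases hst with ⟨rfl, rfl⟩; exact le_of_eq h2'
    · rw [h3 s t hst]; exact hXM s t
  intro fuel
  induction fuel with
  | zero =>
      intro X hXM hfuel
      exact finish X hXM (by push_cast at hfuel; linarith)
  | succ c ih =>
      intro X hXM hfuel
      by_cases hbig : hv α γ cstar istar jstar ≤ f (X k l)
      · exact finish X hXM hbig
      · push_neg at hbig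
        obtain ⟨i, j, hij1, hij2⟩ := dense_step hα hγ cstar (f (X k l) - α)
        have hij1' : f (X k l) - α ≤ hv α γ cstar i j := hij1
        have hij2' : hv α γ cstar i j < f (X k l) := by
          have : hv α γ cstar i j < f (X k l) - α + α := hij2
          linarith
        obtain ⟨X', h1, h2, h3⟩ := raise X i j (le_of_lt hij2')
        have hnew : f (X' k l) = hv α γ cstar i j + Δ := by
          rw [h2]; exact max_eq_right (by linarith)
        have hXM' : ∀ s t, f (X' s t) ≤ hv α γ cstar istar jstar + Δ := by
          intro s t
          by_cases hst : s = k ∧ t = l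
          · rcases hst with ⟨rfl, rfl⟩; rw [hnew]; linarith
          · rw [h3 s t hst]; exact hXM s t
        have hfuel' : hv α γ cstar istar jstar - f (X' k l) ≤ (c : ℝ) := by
          push_cast at hfuel
          rw [hnew]
          linarith
        obtain ⟨X'', g1, g2, g3, g4⟩ := ih X' hXM' hfuel'
        exact ⟨X'', hr.1.trans h1 g1, g2,
          (fun s t hst => (g3 s t hst).trans (h3 s t hst)), g4⟩

theorem toConst [DecidableEq S] (hinj : Function.Injective f)
    {n : ℕ} {r : (Fin (n+1) → Fin (n+1) → S) → (Fin (n+1) → Fin (n+1) → S) → Prop}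
    (hr : IsCong (matAdd add) (matMul add mul) r)
    (M : ℝ) (s0 : S) (hs0 : f s0 = M)
    (clm : ∀ (k l : Fin (n+1)) (X : Fin (n+1) → Fin (n+1) → S),
      (∀ s t, f (X s t) ≤ M) →
      ∃ X', r X X' ∧ f (X' k l) = M ∧
        (∀ s t, ¬(s = k ∧ t = l) → X' s t = X s t) ∧ ∀ s t, f (X' s t) ≤ M) :
    ∀ (c : ℕ) (X : Fin (n+1) → Fin (n+1) → S),
      ((Finset.univ.filter fun p : Fin (n+1) × Fin (n+1) => X p.1 p.2 ≠ s0).card ≤ c) →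
      (∀ s t, f (X s t) ≤ M) → r X (fun _ _ => s0) := by
  classical
  intro c
  induction c with
  | zero =>
      intro X hcard hXM
      have hX : X = fun _ _ => s0 := by
        funext s t
        by_contra hne
        have hmem : (s, t) ∈ (Finset.univ.filter
            fun p : Fin (n+1) × Fin (n+1) => X p.1 p.2 ≠ s0) :=
          Finset.mem_filter.mpr ⟨Finset.mem_univ _, hne⟩
        rw [Finset.card_eq_zero.mp (Nat.le_zero.mp hcard)] at hmem
        exact absurd hmem (Finset.notMem_empty _)
      rw [hX]
      exact hr.1.refl _
  | succ c ih =>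
      intro X hcard hXM
      by_cases hall : ∀ s t, X s t = s0
      · have hX : X = fun _ _ => s0 := by funext s t; exact hall s t
        rw [hX]; exact hr.1.refl _
      · push_neg at hall
        obtain ⟨k, l, hkl⟩ := hall
        obtain ⟨X', h1, h2, h3, h4⟩ := clm k l X hXM
        have hX'kl : X' k l = s0 := hinj (by rw [h2, hs0])
        have hsub : (Finset.univ.filter
            fun p : Fin (n+1) × Fin (n+1) => X' p.1 p.2 ≠ s0) ⊆
            (Finset.univ.filter
            fun p : Fin (n+1) × Fin (n+1) => X p.1 p.2 ≠ s0).erase (k, l) := by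
          intro p hp
          have hpne : X' p.1 p.2 ≠ s0 := (Finset.mem_filter.mp hp).2
          have hpkl : ¬(p.1 = k ∧ p.2 = l) := by
            rintro ⟨ha, hb⟩
            exact hpne (by rw [ha, hb, hX'kl])
          refine Finset.mem_erase.mpr ⟨?_, Finset.mem_filter.mpr
            ⟨Finset.mem_univ _, by rwa [h3 p.1 p.2 hpkl] at hpne⟩⟩
          intro hpe
          exact hpkl ⟨by rw [hpe], by rw [hpe]⟩
        have hmemkl : (k, l) ∈ (Finset.univ.filter
            fun p : Fin (n+1) × Fin (n+1) => X p.1 p.2 ≠ s0) :=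
          Finset.mem_filter.mpr ⟨Finset.mem_univ _, hkl⟩
        have hcard' : (Finset.univ.filter
            fun p : Fin (n+1) × Fin (n+1) => X' p.1 p.2 ≠ s0).card ≤ c := by
          have := Finset.card_le_card hsub
          rw [Finset.card_erase_of_mem hmemkl] at this
          omega
        exact hr.1.trans h1 (ih X' hcard' h4)

end

section
variable {S : Type} {f : S → ℝ} {add mul : S → S → S}

theorem main (hinj : Function.Injective f)
    (hadd : ∀ a b : S, f (add a b) = max (f a) (f b))
    (hmul : ∀ a b : S, f (mul a b) = f a + f b)
    {p q : S} (hp : 0 < f p) (hq : f q < 0)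
    {n : ℕ} {r : (Fin (n+1) → Fin (n+1) → S) → (Fin (n+1) → Fin (n+1) → S) → Prop}
    (hr : IsCong (matAdd add) (matMul add mul) r)
    {A B : Fin (n+1) → Fin (n+1) → S} (hAB : r A B) {i j : Fin (n+1)}
    (hab : f (A i j) < f (B i j)) :
    ∀ X Y, r X Y := by
  classical
  obtain ⟨cA, hcA⟩ := ent_hi (f := f) A
  obtain ⟨cB, hcB⟩ := ent_hi (f := f) B
  set cAB := max cA cB with hcAB
  have hcA' : ∀ s t, f (A s t) ≤ cAB := fun s t => le_trans (hcA s t) (le_max_left _ _)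
  have hcB' : ∀ s t, f (B s t) ≤ cAB := fun s t => le_trans (hcB s t) (le_max_right _ _)
  set α := f p with hα
  set γ := f q with hγ
  set a := f (A i j) with ha
  set b := f (B i j) with hb
  -- stage 1 : project the difference to entry (0,0)
  obtain ⟨z1, hz1⟩ := exists_small (f := f) hmul hq (min (f q) (γ + a - cAB))
  have hz1q : f z1 ≤ f q := le_trans hz1 (min_le_left _ _)
  have hz1c : f z1 ≤ γ + a - cAB := le_trans hz1 (min_le_right _ _)
  set C := matMul add mul (matMul add mul (Pm q z1 (0 : Fin (n+1)) i) A) (Pm q z1 j 0) with hC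
  set D := matMul add mul (matMul add mul (Pm q z1 (0 : Fin (n+1)) i) B) (Pm q z1 j 0) with hD
  have hCD : r C D :=
    hr.2.2 _ _ _ _ (hr.2.2 _ _ _ _ (hr.1.refl _) hAB) (hr.1.refl _)
  set c0 := γ + a + γ with hc0
  set d0 := γ + b + γ with hd0
  have projA := proj (f := f) hadd hmul A (0 : Fin (n+1)) 0 i j q q z1 cAB hcA' hz1q hz1q
  have projB := proj (f := f) hadd hmul B (0 : Fin (n+1)) 0 i j q q z1 cAB hcB' hz1q hz1q
  have hjunk1 : f z1 + cAB + max (f q) (f q) ≤ c0 := by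
    rw [max_self]; simp only [hc0]; linarith
  have hc0d0 : c0 ≤ d0 := by simp only [hc0, hd0]; linarith
  have hC00 : f (C 0 0) = c0 := by
    refine le_antisymm (le_trans projA.2.1 (max_le (by simp only [hc0]; linarith) hjunk1)) ?_
    have := projA.1
    simp only [hc0]; linarith
  have hCall : ∀ s t, f (C s t) ≤ c0 := by
    intro s t
    by_cases hst : s = (0 : Fin (n+1)) ∧ t = (0 : Fin (n+1))
    · rcases hst with ⟨rfl, rfl⟩; exact le_of_eq hC00
    · exact le_trans (projA.2.2 s t hst) hjunk1
  have hD00 : f (D 0 0) = d0 := by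
    refine le_antisymm (le_trans projB.2.1 (max_le (by simp only [hd0]; linarith)
      (le_trans hjunk1 hc0d0))) ?_
    have := projB.1
    simp only [hd0]; linarith
  have hDall : ∀ s t, f (D s t) ≤ d0 := by
    intro s t
    by_cases hst : s = (0 : Fin (n+1)) ∧ t = (0 : Fin (n+1))
    · rcases hst with ⟨rfl, rfl⟩; exact le_of_eq hD00
    · exact le_trans (projB.2.2 s t hst) (le_trans hjunk1 hc0d0)
  -- stage 2 : amplify the gap by powering
  have hδ : 0 < d0 - c0 := by simp only [hc0, hd0]; linarith
  obtain ⟨mp, hmp⟩ := exists_nat_ge ((α + 1) / (d0 - c0))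
  have hΔbig : α + 1 ≤ ((mp : ℝ) + 1) * (d0 - c0) := by
    have h1 : (α + 1) / (d0 - c0) ≤ (mp : ℝ) + 1 := by linarith
    have := (div_le_iff₀ hδ).mp h1
    linarith
  set Δ := ((mp : ℝ) + 1) * (d0 - c0) with hΔ
  set cstar := ((mp : ℝ) + 1) * c0 with hcstar
  set Cm := mpow add mul C mp with hCm
  set Dm := mpow add mul D mp with hDm
  have specC := mpow_spec (f := f) hadd hmul C c0 hC00 hCall mp
  have specD := mpow_spec (f := f) hadd hmul D d0 hD00 hDall mp
  have hrel : r Cm Dm := mpow_rel (fun a b c d => hr.2.2 a b c d) hCD mp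
  have hd0' : ((mp : ℝ) + 1) * d0 = cstar + Δ := by simp only [hcstar, hΔ]; ring
  have hCmall : ∀ s t, f (Cm s t) ≤ ((mp : ℝ) + 1) * d0 := by
    intro s t
    refine le_trans (specC.2 s t) ?_
    have : (0:ℝ) ≤ (mp : ℝ) + 1 := by positivity
    nlinarith
  -- the key raising gadget
  have hα0 : 0 < α := hp
  have hγ0 : γ < 0 := hq
  have key : ∀ (k l : Fin (n+1)) (i' j' : ℕ) (β : ℝ),
      ∃ G G' : Fin (n+1) → Fin (n+1) → S,
       r G G' ∧ f (G k l) ≤ hv α γ cstar i' j' ∧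
       f (G' k l) = hv α γ cstar i' j' + Δ ∧
       (∀ s t, ¬(s = k ∧ t = l) → f (G s t) ≤ β) ∧
       (∀ s t, ¬(s = k ∧ t = l) → f (G' s t) ≤ β) := by
    intro k l i' j' β
    set w := spow mul p i' with hw
    set w' := spow mul q j' with hw'
    have hfw : f w = ((i' : ℝ) + 1) * α := spow_spec hmul p i'
    have hfw' : f w' = ((j' : ℝ) + 1) * γ := spow_spec hmul q j'
    have hhv : hv α γ cstar i' j' = f w + cstar + f w' := by
      rw [hfw, hfw']; simp only [hv]; ring
    obtain ⟨z2, hz2⟩ := exists_small (f := f) hmul hq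
      (min (min (f w) (f w'))
        (min β (hv α γ cstar i' j') - ((mp : ℝ) + 1) * d0 - max (f w) (f w')))
    have hz2w : f z2 ≤ f w := le_trans hz2 (le_trans (min_le_left _ _) (min_le_left _ _))
    have hz2w' : f z2 ≤ f w' := le_trans hz2 (le_trans (min_le_left _ _) (min_le_right _ _))
    have hz2j : f z2 + ((mp : ℝ) + 1) * d0 + max (f w) (f w') ≤
        min β (hv α γ cstar i' j') := by
      have := le_trans hz2 (min_le_right _ _)
      linarith
    have projC := proj (f := f) hadd hmul Cm k l (0 : Fin (n+1)) 0 w w' z2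
      (((mp : ℝ) + 1) * d0) hCmall hz2w hz2w'
    have projD := proj (f := f) hadd hmul Dm k l (0 : Fin (n+1)) 0 w w' z2
      (((mp : ℝ) + 1) * d0) specD.2 hz2w hz2w'
    refine ⟨_, _, hr.2.2 _ _ _ _ (hr.2.2 _ _ _ _ (hr.1.refl (Pm w z2 k 0)) hrel)
      (hr.1.refl (Pm w' z2 0 l)), ?_, ?_, ?_, ?_⟩
    · refine le_trans projC.2.1 (max_le ?_ ?_)
      · rw [specC.1, hhv]
      · linarith [min_le_right β (hv α γ cstar i' j'), hz2j]
    · refine le_antisymm (le_trans projD.2.1 (max_le ?_ ?_)) ?_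
      · rw [specD.1, hd0', hhv]; linarith
      · have h1 := le_trans hz2j (min_le_right β _)
        have h2 : (0:ℝ) < Δ := by linarith
        linarith
      · have := projD.1
        rw [specD.1, hd0'] at this
        rw [hhv]; linarith
    · intro s t hst
      exact le_trans (projC.2.2 s t hst) (le_trans hz2j (min_le_left _ _))
    · intro s t hst
      exact le_trans (projD.2.2 s t hst) (le_trans hz2j (min_le_left _ _))
  -- final assembly
  intro X Y
  obtain ⟨hiX, hhiX⟩ := ent_hi (f := f) X
  obtain ⟨hiY, hhiY⟩ := ent_hi (f := f) Y
  obtain ⟨istar, jstar, hst1, _⟩ := dense_step hα0 hγ0 cstar (max hiX hiY)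
  have hst1' : max hiX hiY ≤ hv α γ cstar istar jstar := hst1
  set M := hv α γ cstar istar jstar + Δ with hM
  obtain ⟨G0, G0', _, _, hG0'kl, _, _⟩ := key 0 0 istar jstar 0
  set s0 := G0' 0 0 with hs0def
  have hs0 : f s0 = M := hG0'kl
  have hΔ0 : (0:ℝ) < Δ := by linarith
  have clm : ∀ (k l : Fin (n+1)) (Z : Fin (n+1) → Fin (n+1) → S),
      (∀ s t, f (Z s t) ≤ M) →
      ∃ Z', r Z Z' ∧ f (Z' k l) = M ∧
        (∀ s t, ¬(s = k ∧ t = l) → Z' s t = Z s t) ∧ ∀ s t, f (Z' s t) ≤ M := by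
    intro k l Z hZM
    obtain ⟨fl, hfl⟩ := exists_nat_ge (hv α γ cstar istar jstar - f (Z k l))
    exact climb hinj hadd hr α γ Δ cstar hα0 hγ0 hΔbig key k l istar jstar fl Z hZM hfl
  have tc := toConst (f := f) (mul := mul) hinj hr M s0 hs0 clm
  have hXM : ∀ s t, f (X s t) ≤ M := fun s t => by
    have := hhiX s t
    have : f (X s t) ≤ max hiX hiY := le_trans this (le_max_left _ _)
    linarith
  have hYM : ∀ s t, f (Y s t) ≤ M := fun s t => by
    have := hhiY s t
    have : f (Y s t) ≤ max hiX hiY := le_trans this (le_max_right _ _)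
    linarith
  exact hr.1.trans (tc _ X le_rfl hXM) (hr.1.symm (tc _ Y le_rfl hYM))

end



/-- If `S` is (isomorphic to) a subsemiring of the max-plus semiring
`ℝ(max,+)` containing a positive and a negative real, then `M_n(S)` is
congruence-simple for every `n ≥ 2`. -/
theorem stmt_7 {S : Type} (add mul : S → S → S) (f : S → ℝ)
    (hinj : Function.Injective f)
    (hadd : ∀ a b : S, f (add a b) = max (f a) (f b))
    (hmul : ∀ a b : S, f (mul a b) = f a + f b)
    (hpos : ∃ a : S, 0 < f a) (hneg : ∃ a : S, f a < 0) :
    ∀ m : ℕ,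
      CongSimple (T := Fin (m + 2) → Fin (m + 2) → S) (matAdd add) (matMul add mul) := by
  obtain ⟨p, hp⟩ := hpos
  obtain ⟨q, hq⟩ := hneg
  intro m
  constructor
  · refine ⟨(fun _ _ => p), (fun _ _ => q), fun h => ?_⟩
    have hpq : p = q := congrFun (congrFun h 0) 0
    rw [hpq] at hp
    linarith
  · intro r hr
    by_cases hcase : r = (· = ·)
    · exact Or.inl hcase
    · right
      have hex : ∃ A B : Fin (m + 2) → Fin (m + 2) → S, A ≠ B ∧ r A B := by
        by_contra hno
        push_neg at hno
        apply hcase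
        funext A B
        apply propext
        constructor
        · intro hrAB
          by_contra hne
          exact hno A B hne hrAB
        · intro heq
          exact heq ▸ hr.1.refl A
      obtain ⟨A, B, hne, hAB⟩ := hex
      have hij : ∃ i j, A i j ≠ B i j := by
        by_contra hno
        push_neg at hno
        exact hne (funext fun i => funext fun j => hno i j)
      obtain ⟨i, j, hijne⟩ := hij
      have hfne : f (A i j) ≠ f (B i j) := fun h => hijne (hinj h)
      have hall : ∀ X Y, r X Y := by
        rcases lt_or_gt_of_ne hfne with h | h
        · exact main hinj hadd hmul hp hq hr hAB h
        · exact main hinj hadd hmul hp hq hr (hr.1.symm hAB) h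
      funext X Y
      exact eq_true (hall X Y)
end
end

section
/- Let S be an additively idempotent semiring with exactly two elements such that M_n(S) is congruence-simple for some n ≥ 2. Then S is isomorphic to the two-element distributive lattice L_2({0,1}, ∨, ∧) viewed as a semiring with addition ∨ and multiplication ∧. -/
section AuxStmt8

variable {S : Type}

private lemma stmt8_sum_a_iff (add : S → S → S) (a : S)
    (haa : add a a = a)
    (hsplit : ∀ x y : S, add x y = a → x = a ∧ y = a) :
    ∀ {k : ℕ} (f : Fin (k + 1) → S), finSum add f = a ↔ ∀ i, f i = a := by
  intro k
  induction k with
  | zero =>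
    intro f
    constructor
    · intro h i
      have hi : i = 0 := Fin.ext (by omega)
      rw [hi]; exact h
    · intro h; exact h 0
  | succ k ih =>
    intro f
    constructor
    · intro h
      obtain ⟨h1, h2⟩ := hsplit _ _ h
      intro i
      induction i using Fin.lastCases with
      | last => exact h2
      | cast j => exact (ih _).mp h1 j
    · intro h
      show add _ _ = a
      rw [(ih _).mpr (fun j => h _), h (Fin.last _)]
      exact haa

private lemma stmt8_contra (add mul : S → S → S) (a b : S) (hab : a ≠ b)
    (hall : ∀ x : S, x = a ∨ x = b)
    (haa : add a a = a) (habb : add a b = b) (hba : add b a = b) (hbb : add b b = b)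
    (m : ℕ)
    (hcs : CongSimple (T := Fin (m + 2) → Fin (m + 2) → S) (matAdd add) (matMul add mul))
    (P : Prop → Prop → Prop)
    (hP : ∀ A C : Fin (m + 2) → Fin (m + 2) → S,
      (∀ i j k : Fin (m + 2), mul (A i k) (C k j) = a) ↔
        P (∀ i j, A i j = a) (∀ i j, C i j = a)) :
    False := by
  have hbne : b ≠ a := fun h' => hab h'.symm
  have hsplit : ∀ x y : S, add x y = a → x = a ∧ y = a := by
    intro x y hxy
    rcases hall x with rfl | rfl <;> rcases hall y with rfl | rfl
    · exact ⟨rfl, rfl⟩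
    · rw [habb] at hxy; exact absurd hxy hbne
    · rw [hba] at hxy; exact absurd hxy hbne
    · rw [hbb] at hxy; exact absurd hxy hbne
  have eqiff : ∀ x y : S, (x = a ↔ y = a) → x = y := by
    intro x y hxy
    rcases hall x with rfl | rfl <;> rcases hall y with rfl | rfl
    · rfl
    · exact absurd (hxy.mp rfl) hbne
    · exact absurd (hxy.mpr rfl) hbne
    · rfl
  set tot : (Fin (m + 2) → Fin (m + 2) → S) → S :=
    fun X => finSum add (fun i => finSum add (X i)) with htot
  have tot_a : ∀ X : Fin (m + 2) → Fin (m + 2) → S,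
      tot X = a ↔ ∀ i j, X i j = a := by
    intro X
    rw [htot]
    rw [stmt8_sum_a_iff add a haa hsplit]
    exact forall_congr' fun i => stmt8_sum_a_iff add a haa hsplit (X i)
  set r : (Fin (m + 2) → Fin (m + 2) → S) → (Fin (m + 2) → Fin (m + 2) → S) → Prop :=
    fun X Y => tot X = tot Y with hr
  have hcong : IsCong (matAdd add) (matMul add mul) r := by
    refine ⟨⟨fun _ => rfl, Eq.symm, Eq.trans⟩, ?_, ?_⟩
    · intro A B C D h1 h2
      have hA : (∀ i j, A i j = a) ↔ (∀ i j, B i j = a) := by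
        rw [← tot_a, ← tot_a, h1]
      have hC : (∀ i j, C i j = a) ↔ (∀ i j, D i j = a) := by
        rw [← tot_a, ← tot_a, h2]
      apply eqiff
      rw [tot_a, tot_a]
      have key : ∀ X Y : Fin (m + 2) → Fin (m + 2) → S,
          (∀ i j, matAdd add X Y i j = a) ↔
            ((∀ i j, X i j = a) ∧ (∀ i j, Y i j = a)) := by
        intro X Y
        constructor
        · intro hh
          exact ⟨fun i j => (hsplit _ _ (hh i j)).1, fun i j => (hsplit _ _ (hh i j)).2⟩
        · intro hh i j
          show add (X i j) (Y i j) = a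
          rw [hh.1 i j, hh.2 i j]; exact haa
      rw [key, key, hA, hC]
    · intro A B C D h1 h2
      have hA : (∀ i j, A i j = a) ↔ (∀ i j, B i j = a) := by
        rw [← tot_a, ← tot_a, h1]
      have hC : (∀ i j, C i j = a) ↔ (∀ i j, D i j = a) := by
        rw [← tot_a, ← tot_a, h2]
      apply eqiff
      rw [tot_a, tot_a]
      have key : ∀ X Y : Fin (m + 2) → Fin (m + 2) → S,
          (∀ i j, matMul add mul X Y i j = a) ↔
            P (∀ i j, X i j = a) (∀ i j, Y i j = a) := by
        intro X Y
        rw [← hP]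
        constructor
        · intro hh i j k
          exact (stmt8_sum_a_iff add a haa hsplit _).mp (hh i j) k
        · intro hh i j
          exact (stmt8_sum_a_iff add a haa hsplit _).mpr (fun k => hh i j k)
      rw [key, key, hA, hC]
  have h10 : (1 : Fin (m + 2)) ≠ 0 := by
    intro hh
    have := congrArg Fin.val hh
    simp [Fin.val_one] at this
  rcases hcs.2 r hcong with heq | htrue
  · have hXY : r (fun _ _ => b) (fun i j => if i = 0 ∧ j = 0 then a else b) := by
      apply eqiff
      rw [tot_a, tot_a]
      constructor
      · intro hh; exact absurd (hh 0 0) hbne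
      · intro hh
        have h01 := hh 0 1
        rw [if_neg (fun hc => h10 hc.2)] at h01
        exact absurd h01 hbne
    rw [congrFun (congrFun heq _) _] at hXY
    have := congrFun (congrFun hXY 0) 0
    rw [if_pos ⟨rfl, rfl⟩] at this
    exact hbne this
  · have hXY : r (fun _ _ => a) (fun _ _ => b) := by
      rw [congrFun (congrFun htrue _) _]; trivial
    have h1 : tot (fun _ _ => a) = a := (tot_a _).mpr (fun _ _ => rfl)
    have h2 : tot (fun _ _ => b) = a := by rw [← hXY]; exact h1
    exact hbne ((tot_a _).mp h2 0 0)

private lemma stmt8_main (add mul : S → S → S) (hS : IsSemiring add mul)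
    (hidem : ∀ a : S, add a a = a)
    (a b : S) (hab : a ≠ b) (hall : ∀ x : S, x = a ∨ x = b)
    (habb : add a b = b)
    (h : ∃ m : ℕ,
      CongSimple (T := Fin (m + 2) → Fin (m + 2) → S) (matAdd add) (matMul add mul)) :
    ∃ φ : S → Bool, Function.Bijective φ ∧
      ∀ x y : S, φ (add x y) = (φ x || φ y) ∧ φ (mul x y) = (φ x && φ y) := by
  classical
  obtain ⟨hcomm, _, _, hldist, hrdist⟩ := hS
  have haa : add a a = a := hidem a
  have hbb : add b b = b := hidem b
  have hba : add b a = b := (hcomm b a).trans habb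
  have hbne : b ≠ a := fun h' => hab h'.symm
  have hsplitS : ∀ x y : S, add x y = a → x = a ∧ y = a := by
    intro x y hxy
    rcases hall x with rfl | rfl <;> rcases hall y with rfl | rfl
    · exact ⟨rfl, rfl⟩
    · rw [habb] at hxy; exact absurd hxy hbne
    · rw [hba] at hxy; exact absurd hxy hbne
    · rw [hbb] at hxy; exact absurd hxy hbne
  have eAB : add (mul a a) (mul a b) = mul a b := by rw [← hldist, habb]
  have eBB1 : add (mul b a) (mul b b) = mul b b := by rw [← hldist, habb]
  have eBA : add (mul a a) (mul b a) = mul b a := by rw [← hrdist, habb]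
  have eBB2 : add (mul a b) (mul b b) = mul b b := by rw [← hrdist, habb]
  rcases hall (mul a a) with h00 | h00
  · rcases hall (mul a b) with h01 | h01
    · rcases hall (mul b a) with h10 | h10
      · rcases hall (mul b b) with h11 | h11
        · -- const 0 : bad
          obtain ⟨m, hcs⟩ := h
          have hmul : ∀ x y : S, mul x y = a := by
            intro x y
            rcases hall x with rfl | rfl <;> rcases hall y with rfl | rfl <;> assumption
          refine absurd (stmt8_contra add mul a b hab hall haa habb hba hbb m hcs
            (fun _ _ => True) ?_) (fun hf => hf)
          intro A C
          simp only [hmul, iff_true]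
          intro _ _ _; trivial
        · -- the lattice case: good
          refine ⟨fun x => if x = a then false else true, ⟨?_, ?_⟩, ?_⟩
          · intro x y hxy
            rcases hall x with rfl | rfl <;> rcases hall y with rfl | rfl
            · rfl
            · simp [hbne] at hxy
            · simp [hbne] at hxy
            · rfl
          · intro c
            cases c
            · exact ⟨a, if_pos rfl⟩
            · exact ⟨b, if_neg hbne⟩
          · intro x y
            rcases hall x with rfl | rfl <;> rcases hall y with rfl | rfl <;>
              constructor <;> simp [haa, habb, hba, hbb, h00, h01, h10, h11, hbne]
      · rcases hall (mul b b) with h11 | h11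
        · -- kill: m10 = b, m11 = a
          rw [h10, h11, hba] at eBB1
          exact absurd eBB1 hbne
        · -- left projection : bad
          obtain ⟨m, hcs⟩ := h
          have hmul : ∀ x y : S, mul x y = x := by
            intro x y
            rcases hall x with rfl | rfl <;> rcases hall y with rfl | rfl <;> assumption
          refine absurd (stmt8_contra add mul a b hab hall haa habb hba hbb m hcs
            (fun p _ => p) ?_) (fun hf => hf)
          intro A C
          constructor
          · intro hh i j
            have := hh i 0 j
            rwa [hmul] at this
          · intro hh i j k
            rw [hmul]; exact hh i k
    · rcases hall (mul b b) with h11 | h11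
      · -- kill: m01 = b, m11 = a
        rw [h01, h11, hba] at eBB2
        exact absurd eBB2 hbne
      · rcases hall (mul b a) with h10 | h10
        · -- right projection : bad
          obtain ⟨m, hcs⟩ := h
          have hmul : ∀ x y : S, mul x y = y := by
            intro x y
            rcases hall x with rfl | rfl <;> rcases hall y with rfl | rfl <;> assumption
          refine absurd (stmt8_contra add mul a b hab hall haa habb hba hbb m hcs
            (fun _ q => q) ?_) (fun hf => hf)
          intro A C
          constructor
          · intro hh i j
            have := hh 0 j i
            rwa [hmul] at this
          · intro hh i j k
            rw [hmul]; exact hh k j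
        · -- mul = add (join) : bad
          obtain ⟨m, hcs⟩ := h
          have hmul : ∀ x y : S, mul x y = add x y := by
            intro x y
            rcases hall x with rfl | rfl <;> rcases hall y with rfl | rfl
            · rw [h00, haa]
            · rw [h01, habb]
            · rw [h10, hba]
            · rw [h11, hbb]
          refine absurd (stmt8_contra add mul a b hab hall haa habb hba hbb m hcs
            (fun p q => p ∧ q) ?_) (fun hf => hf)
          intro A C
          constructor
          · intro hh
            constructor
            · intro i j
              have := hh i 0 j
              rw [hmul] at this
              exact (hsplitS _ _ this).1
            · intro i j
              have := hh 0 j i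
              rw [hmul] at this
              exact (hsplitS _ _ this).2
          · intro hh i j k
            rw [hmul, hh.1 i k, hh.2 k j]; exact haa
  · rcases hall (mul a b) with h01 | h01
    · -- kill: m00 = b, m01 = a
      rw [h00, h01, hba] at eAB
      exact absurd eAB hbne
    · rcases hall (mul b a) with h10 | h10
      · -- kill: m00 = b, m10 = a
        rw [h00, h10, hba] at eBA
        exact absurd eBA hbne
      · rcases hall (mul b b) with h11 | h11
        · -- kill: m10 = b, m11 = a
          rw [h10, h11, hba] at eBB1
          exact absurd eBB1 hbne
        · -- const 1 : bad
          obtain ⟨m, hcs⟩ := h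
          have hmul : ∀ x y : S, mul x y = b := by
            intro x y
            rcases hall x with rfl | rfl <;> rcases hall y with rfl | rfl <;> assumption
          refine absurd (stmt8_contra add mul a b hab hall haa habb hba hbb m hcs
            (fun _ _ => False) ?_) (fun hf => hf)
          intro A C
          constructor
          · intro hh
            have := hh 0 0 0
            rw [hmul] at this
            exact hbne this
          · intro hh; exact hh.elim

end AuxStmt8

/-- A two-element additively idempotent semiring with `M_n(S)` congruence-simple
for some `n ≥ 2` is isomorphic to the two-element lattice `L₂(∨,∧)`. -/
theorem stmt_8 {S : Type} (add mul : S → S → S) (hS : IsSemiring add mul)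
    (hidem : ∀ a : S, add a a = a)
    (htwo : ∃ a b : S, a ≠ b ∧ ∀ x : S, x = a ∨ x = b)
    (h : ∃ m : ℕ,
      CongSimple (T := Fin (m + 2) → Fin (m + 2) → S) (matAdd add) (matMul add mul)) :
    ∃ φ : S → Bool, Function.Bijective φ ∧
      ∀ a b : S, φ (add a b) = (φ a || φ b) ∧ φ (mul a b) = (φ a && φ b) := by
  obtain ⟨a, b, hab, hall⟩ := htwo
  rcases hall (add a b) with hadd | hadd
  · exact stmt8_main add mul hS hidem b a (fun h' => hab h'.symm)
      (fun x => (hall x).symm) ((hS.1 b a).trans hadd) h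
  · exact stmt8_main add mul hS hidem a b hab hall hadd h
end

section
/- Let S be an almost integral semiring (additively idempotent with ab + ba + a = a for all a, b ∈ S). If w ∈ S is a minimal element with respect to the order x ≤ y iff x + y = y, then w is a zero element of S (i.e., wx = xw = w and w + x = x for all x ∈ S). -/
/-- In an almost integral semiring, any minimal element is a zero element. -/
theorem stmt_9 {S : Type} (add mul : S → S → S) (hS : AlmostIntegral add mul)
    (w : S) (hmin : ∀ x : S, add x w = w → x = w) :
    IsZero add mul w := by
  obtain ⟨⟨hcomm, hassoc, _, _, _⟩, hidem, hai⟩ := hS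
  intro x
  have key1 : ∀ a b : S, add a (add (add a b) w) = add (add a b) w := fun a b => by
    rw [← hassoc, ← hassoc, hidem]
  have key2 : ∀ a b : S, add a (add (add b a) w) = add (add b a) w := fun a b => by
    rw [← hassoc, ← hassoc, hcomm a b, hassoc b a a, hidem]
  have hwx : mul w x = w := by
    apply hmin
    calc add (mul w x) w = add (mul w x) (add (add (mul w x) (mul x w)) w) := by
          rw [hai w x]
      _ = add (add (mul w x) (mul x w)) w := key1 _ _
      _ = w := hai w x
  have hxw : mul x w = w := by
    apply hmin
    calc add (mul x w) w = add (mul x w) (add (add (mul w x) (mul x w)) w) := by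
          rw [hai w x]
      _ = add (add (mul w x) (mul x w)) w := key2 _ _
      _ = w := hai w x
  refine ⟨hwx, hxw, ?_⟩
  have := hai x w
  rw [hxw, hwx, hidem] at this
  exact this
end

section
/- Let S be an almost integral subdirectly irreducible semiring. Then S has a zero element 0, a least element e with e ≠ 0, and for all a, b ∈ S with a ≰ b there exist c, d ∈ S¹ such that cad ≠ 0 = cbd. Moreover the least non-identical congruence of S is {(0,e),(e,0)} ∪ id_S. -/
def Sig {S : Type} (mul : S → S → S) (z a b : S) : Prop :=
  (a = z ↔ b = z) ∧ (∀ c, mul c a = z ↔ mul c b = z) ∧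
    (∀ d, mul a d = z ↔ mul b d = z) ∧
    (∀ c d, mul (mul c a) d = z ↔ mul (mul c b) d = z)

theorem sig_trans {S : Type} (mul : S → S → S) (z a b c : S)
    (h : Sig mul z a b) (g : Sig mul z b c) : Sig mul z a c := by
  obtain ⟨h1, h2, h3, h4⟩ := h
  obtain ⟨g1, g2, g3, g4⟩ := g
  exact ⟨h1.trans g1, fun c => (h2 c).trans (g2 c), fun d => (h3 d).trans (g3 d),
    fun c d => (h4 c d).trans (g4 c d)⟩

theorem sig_isCong {S : Type} (add mul : S → S → S)
    (hmassoc : ∀ a b c, mul (mul a b) c = mul a (mul b c))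
    (hldist : ∀ a b c, mul a (add b c) = add (mul a b) (mul a c))
    (hrdist : ∀ a b c, mul (add a b) c = add (mul a c) (mul b c))
    (z : S) (hz2 : ∀ p q, add p q = z ↔ (p = z ∧ q = z)) :
    IsCong add mul (Sig mul z) := by
  have stepr : ∀ a b u, Sig mul z a b → Sig mul z (mul a u) (mul b u) := by
    rintro a b u ⟨h1, h2, h3, h4⟩
    refine ⟨h3 u, fun c => ?_, fun d => ?_, fun c d => ?_⟩
    · rw [← hmassoc c a u, ← hmassoc c b u]; exact h4 c u
    · rw [hmassoc a u d, hmassoc b u d]; exact h3 (mul u d)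
    · rw [← hmassoc c a u, ← hmassoc c b u, hmassoc (mul c a) u d,
        hmassoc (mul c b) u d]
      exact h4 c (mul u d)
  have stepl : ∀ u w b, Sig mul z u w → Sig mul z (mul b u) (mul b w) := by
    rintro u w b ⟨g1, g2, g3, g4⟩
    refine ⟨g2 b, fun c => ?_, fun d => ?_, fun c d => ?_⟩
    · rw [← hmassoc c b u, ← hmassoc c b w]; exact g2 (mul c b)
    · exact g4 b d
    · rw [← hmassoc c b u, ← hmassoc c b w]; exact g4 (mul c b) d
  refine ⟨⟨fun a => ⟨Iff.rfl, fun _ => Iff.rfl, fun _ => Iff.rfl, fun _ _ => Iff.rfl⟩,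
    ?_, ?_⟩, ?_, ?_⟩
  · rintro a b ⟨h1, h2, h3, h4⟩
    exact ⟨h1.symm, fun c => (h2 c).symm, fun d => (h3 d).symm,
      fun c d => (h4 c d).symm⟩
  · exact fun h g => sig_trans mul z _ _ _ h g
  · -- additive compatibility
    rintro a b c d ⟨h1, h2, h3, h4⟩ ⟨g1, g2, g3, g4⟩
    refine ⟨?_, fun c' => ?_, fun d' => ?_, fun c' d' => ?_⟩
    · rw [hz2, hz2]; exact and_congr h1 g1
    · rw [hldist, hldist, hz2, hz2]; exact and_congr (h2 c') (g2 c')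
    · rw [hrdist, hrdist, hz2, hz2]; exact and_congr (h3 d') (g3 d')
    · rw [hldist, hldist, hrdist, hrdist, hz2, hz2]
      exact and_congr (h4 c' d') (g4 c' d')
  · -- multiplicative compatibility
    intro a b c d hab hcd
    exact sig_trans mul z _ _ _ (stepr a b c hab) (stepl c d b hcd)

/-- Necessity part of the structure theorem for almost integral subdirectly
irreducible semirings. -/
theorem stmt_11 {S : Type} (add mul : S → S → S) (hS : AlmostIntegral add mul)
    (hsi : SubIrr add mul) :
    ∃ z e : S, IsZero add mul z ∧ e ≠ z ∧ (∀ x : S, x ≠ z → add e x = x) ∧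
      (∀ a b : S, ¬ add a b = b → SepCond mul z a b) ∧
      (IsCong add mul (fun x y => x = y ∨ (x = z ∧ y = e) ∨ (x = e ∧ y = z)) ∧
        (fun x y => x = y ∨ (x = z ∧ y = e) ∨ (x = e ∧ y = z)) ≠ (· = · : S → S → Prop) ∧
        ∀ s : S → S → Prop, IsCong add mul s → s ≠ (· = ·) →
          ∀ a b : S, (a = b ∨ (a = z ∧ b = e) ∨ (a = e ∧ b = z)) → s a b) := by
  obtain ⟨⟨hcomm, hassoc, hmassoc, hldist, hrdist⟩, hidem, hai⟩ := hS
  obtain ⟨r, hrcong, hrne, hrmin⟩ := hsi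
  obtain ⟨⟨hrrefl, hrsymm, hrtrans⟩, hradd, hrmul⟩ := hrcong
  have hlc : ∀ a b c : S, add a (add b c) = add b (add a c) := by
    intro a b c; rw [← hassoc, hcomm a b, hassoc]
  have hidem' : ∀ a b : S, add a (add a b) = add a b := by
    intro a b; rw [← hassoc, hidem]
  -- products lie below the factors
  have hbelow : ∀ s x : S, add (mul x s) s = s ∧ add (mul s x) s = s := by
    intro s x
    have h := hai s x
    constructor
    · calc add (mul x s) s
          = add (mul x s) (add (add (mul s x) (mul x s)) s) := by rw [h]
        _ = add (add (mul s x) (mul x s)) s := by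
              simp only [hassoc, hlc, hcomm, hidem, hidem']
        _ = s := h
    · calc add (mul s x) s
          = add (mul s x) (add (add (mul s x) (mul x s)) s) := by rw [h]
        _ = add (add (mul s x) (mul x s)) s := by
              simp only [hassoc, hlc, hcomm, hidem, hidem']
        _ = s := h
  -- for every s, (p,q) ↦ (p + s = q + s) is a congruence
  have hthcong : ∀ s : S, IsCong add mul (fun p q => add p s = add q s) := by
    intro s
    have key : ∀ p q, add (mul (add p s) (add q s)) s = add (mul p q) s := by
      intro p q
      rw [hldist, hrdist, hrdist]
      simp only [hassoc]
      rw [(hbelow s s).1, (hbelow s p).1, (hbelow s q).2]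
    have key' : ∀ p q, add (add p q) s = add (add p s) (add q s) := by
      intro p q
      simp only [hassoc, hlc, hcomm, hidem, hidem']
    refine ⟨⟨fun _ => rfl, fun h => h.symm, fun h h' => h.trans h'⟩, ?_, ?_⟩
    · intro a b c d ha hc
      have ha' : add a s = add b s := ha
      have hc' : add c s = add d s := hc
      show add (add a c) s = add (add b d) s
      rw [key' a c, key' b d, ha', hc']
    · intro a b c d ha hc
      have ha' : add a s = add b s := ha
      have hc' : add c s = add d s := hc
      show add (mul a c) s = add (mul b d) s
      rw [← key a c, ← key b d, ha', hc']
  -- extract u, z with r u z and u + z ≠ z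
  have hex : ∃ u v, r u v ∧ add u v ≠ v := by
    have hex0 : ∃ u v, r u v ∧ u ≠ v := by
      by_contra h
      push_neg at h
      apply hrne
      funext x y
      exact propext ⟨fun hr => h x y hr, fun he => he ▸ hrrefl x⟩
    obtain ⟨u, v, huv, hne⟩ := hex0
    by_cases h1 : add u v = v
    · refine ⟨v, u, hrsymm huv, fun h2 => hne ?_⟩
      rw [← h1, hcomm, h2]
    · exact ⟨u, v, huv, h1⟩
  obtain ⟨u, z, huv, huvv⟩ := hex
  obtain ⟨e, hedef⟩ : ∃ e : S, e = add u z := ⟨_, rfl⟩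
  have hez : e ≠ z := hedef ▸ huvv
  have hre : r e z := by
    rw [hedef]
    have h := hradd u z z z huv (hrrefl z)
    rwa [hidem] at h
  have heze : add e z = e := by rw [hedef, hassoc, hidem]
  -- the congruence p + z = q + z is trivial
  have hcanc : ∀ x y : S, add x z = add y z → x = y := by
    intro x y hxy
    by_contra hne
    have hsne : (fun p q => add p z = add q z) ≠ (· = · : S → S → Prop) := by
      intro hs
      exact hne (cast (congrFun (congrFun hs x) y) hxy)
    have h2 : add e z = add z z := hrmin _ (hthcong z) hsne e z hre
    rw [heze, hidem] at h2
    exact hez h2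
  -- z is a zero
  have hmulz : ∀ x, mul x z = z := by
    intro x; apply hcanc; rw [(hbelow z x).1, hidem]
  have hmulz' : ∀ x, mul z x = z := by
    intro x; apply hcanc; rw [(hbelow z x).2, hidem]
  have hzadd : ∀ x, add z x = x := by
    intro x
    have h := hai x z
    rwa [hmulz, hmulz', hidem] at h
  have hzero : IsZero add mul z := fun x => ⟨hmulz' x, hmulz x, hzadd x⟩
  -- e is the least nonzero element
  have hleast : ∀ x : S, x ≠ z → add e x = x := by
    intro x hx
    have hsne : (fun p q => add p x = add q x) ≠ (· = · : S → S → Prop) := by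
      intro hs
      have h3 : (add z x = add x x) = (z = x) := congrFun (congrFun hs z) x
      have h4 : add z x = add x x := by rw [hzadd, hidem]
      exact hx (cast h3 h4).symm
    have h2 : add e x = add z x := hrmin _ (hthcong x) hsne e z hre
    rwa [hzadd] at h2
  -- sums equal to z
  have hsum0 : ∀ p q : S, add p q = z → p = z ∧ q = z := by
    intro p q h
    constructor
    · calc p = add p z := by rw [hcomm, hzadd]
        _ = add p (add p q) := by rw [h]
        _ = add p q := by simp only [hassoc, hlc, hcomm, hidem, hidem']
        _ = z := h
    · calc q = add q z := by rw [hcomm, hzadd]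
        _ = add q (add p q) := by rw [h]
        _ = add p q := by simp only [hassoc, hlc, hcomm, hidem, hidem']
        _ = z := h
  have hz2 : ∀ p q : S, add p q = z ↔ (p = z ∧ q = z) :=
    fun p q => ⟨hsum0 p q, fun h => by rw [h.1, h.2, hidem]⟩
  -- the separation congruence Sig is trivial
  have hsigcong := sig_isCong add mul hmassoc hldist hrdist z hz2
  have hsigid : ∀ a b : S, Sig mul z a b → a = b := by
    intro a b hab
    by_contra hne
    have hsne : Sig mul z ≠ (· = · : S → S → Prop) := by
      intro hs
      exact hne (cast (congrFun (congrFun hs a) b) hab)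
    have h2 : Sig mul z e z := hrmin _ hsigcong hsne e z hre
    exact hez (h2.1.mpr rfl)
  -- separation condition
  have hsep : ∀ a b : S, ¬ add a b = b → SepCond mul z a b := by
    intro a b hab
    by_contra hnot
    apply hab
    have h1 : b = z → a = z := fun hb =>
      Classical.byContradiction fun ha => hnot (Or.inl ⟨ha, hb⟩)
    have h2 : ∀ c, mul c b = z → mul c a = z := fun c hb =>
      Classical.byContradiction fun ha => hnot (Or.inr (Or.inl ⟨c, ha, hb⟩))
    have h3 : ∀ d, mul b d = z → mul a d = z := fun d hb =>
      Classical.byContradiction fun ha => hnot (Or.inr (Or.inr (Or.inl ⟨d, ha, hb⟩)))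
    have h4 : ∀ c d, mul (mul c b) d = z → mul (mul c a) d = z := fun c d hb =>
      Classical.byContradiction fun ha =>
        hnot (Or.inr (Or.inr (Or.inr ⟨c, d, ha, hb⟩)))
    apply hsigid
    refine ⟨⟨fun h => (hsum0 a b h).2, fun hb => by rw [h1 hb, hb, hidem]⟩,
      fun c => ?_, fun d => ?_, fun c d => ?_⟩
    · rw [hldist, hz2]
      exact ⟨And.right, fun hb => ⟨h2 c hb, hb⟩⟩
    · rw [hrdist, hz2]
      exact ⟨And.right, fun hb => ⟨h3 d hb, hb⟩⟩
    · rw [hldist, hrdist, hz2]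
      exact ⟨And.right, fun hb => ⟨h4 c d hb, hb⟩⟩
  -- the monolith
  have hmusymm : ∀ x y : S, (x = y ∨ (x = z ∧ y = e) ∨ (x = e ∧ y = z)) →
      (y = x ∨ (y = z ∧ x = e) ∨ (y = e ∧ x = z)) := by
    rintro x y (rfl | ⟨rfl, rfl⟩ | ⟨rfl, rfl⟩)
    · exact Or.inl rfl
    · exact Or.inr (Or.inr ⟨rfl, rfl⟩)
    · exact Or.inr (Or.inl ⟨rfl, rfl⟩)
  have hbe : ∀ t : S, add t e = e → t = z ∨ t = e := by
    intro t ht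
    by_cases h : t = z
    · exact Or.inl h
    · right
      calc t = add e t := (hleast t h).symm
        _ = add t e := hcomm e t
        _ = e := ht
  have haddz : ∀ t : S, (add z t = add e t ∨ (add z t = z ∧ add e t = e) ∨
      (add z t = e ∧ add e t = z)) := by
    intro t
    by_cases h : t = z
    · exact Or.inr (Or.inl ⟨by rw [h, hidem], by rw [h, heze]⟩)
    · exact Or.inl (by rw [hzadd, hleast t h])
  have hmulez : ∀ t : S, (mul z t = mul e t ∨ (mul z t = z ∧ mul e t = e) ∨
      (mul z t = e ∧ mul e t = z)) := by
    intro t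
    rcases hbe (mul e t) (hbelow e t).2 with h | h
    · exact Or.inl (by rw [hmulz', h])
    · exact Or.inr (Or.inl ⟨hmulz' t, h⟩)
  have hmulez' : ∀ t : S, (mul t z = mul t e ∨ (mul t z = z ∧ mul t e = e) ∨
      (mul t z = e ∧ mul t e = z)) := by
    intro t
    rcases hbe (mul t e) (hbelow e t).1 with h | h
    · exact Or.inl (by rw [hmulz, h])
    · exact Or.inr (Or.inl ⟨hmulz t, h⟩)
  have hmee : (z = mul e e ∨ (z = z ∧ mul e e = e) ∨ (z = e ∧ mul e e = z)) := by
    have h := hmulez e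
    rwa [hmulz' e] at h
  refine ⟨z, e, hzero, hez, hleast, hsep, ⟨⟨fun a => Or.inl rfl,
    fun h => hmusymm _ _ h, ?_⟩, ?_, ?_⟩, ?_, ?_⟩
  · -- transitivity of the monolith
    rintro x y w (rfl | ⟨rfl, rfl⟩ | ⟨rfl, rfl⟩) (h | h | h)
    · exact Or.inl h
    · exact Or.inr (Or.inl h)
    · exact Or.inr (Or.inr h)
    · exact Or.inr (Or.inl ⟨rfl, h.symm⟩)
    · exact absurd h.1 hez
    · exact Or.inl h.2.symm
    · exact Or.inr (Or.inr ⟨rfl, h.symm⟩)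
    · exact Or.inl h.2.symm
    · exact absurd h.1 (fun hh => hez hh.symm)
  · -- additive compatibility of the monolith
    rintro a b c d (rfl | ⟨ha, hb⟩ | ⟨ha, hb⟩) (rfl | ⟨hc, hd⟩ | ⟨hc, hd⟩)
    · exact Or.inl rfl
    · rw [hc, hd, hcomm a z, hcomm a e]; exact haddz a
    · rw [hc, hd, hcomm a e, hcomm a z]; exact hmusymm _ _ (haddz a)
    · rw [ha, hb]; exact haddz c
    · rw [ha, hb, hc, hd, hidem, hidem]; exact Or.inr (Or.inl ⟨rfl, rfl⟩)
    · rw [ha, hb, hc, hd, hzadd, heze]; exact Or.inl rfl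
    · rw [ha, hb]; exact hmusymm _ _ (haddz c)
    · rw [ha, hb, hc, hd, heze, hzadd]; exact Or.inl rfl
    · rw [ha, hb, hc, hd, hidem, hidem]; exact Or.inr (Or.inr ⟨rfl, rfl⟩)
  · -- multiplicative compatibility of the monolith
    rintro a b c d (rfl | ⟨ha, hb⟩ | ⟨ha, hb⟩) (rfl | ⟨hc, hd⟩ | ⟨hc, hd⟩)
    · exact Or.inl rfl
    · rw [hc, hd]; exact hmulez' a
    · rw [hc, hd]; exact hmusymm _ _ (hmulez' a)
    · rw [ha, hb]; exact hmulez c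
    · rw [ha, hb, hc, hd, hmulz' z]; exact hmee
    · rw [ha, hb, hc, hd, hmulz' e, hmulz e]; exact Or.inl rfl
    · rw [ha, hb]; exact hmusymm _ _ (hmulez c)
    · rw [ha, hb, hc, hd, hmulz e, hmulz' e]; exact Or.inl rfl
    · rw [ha, hb, hc, hd, hmulz' z]; exact hmusymm _ _ hmee
  · -- the monolith is not the identity relation
    intro hmu
    exact hez (cast (congrFun (congrFun hmu e) z) (Or.inr (Or.inr ⟨rfl, rfl⟩)))
  · -- minimality
    intro s hscong hsne a b hab
    rcases hab with rfl | ⟨ha, hb⟩ | ⟨ha, hb⟩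
    · exact hscong.1.refl a
    · rw [ha, hb]; exact hscong.1.symm (hrmin s hscong hsne e z hre)
    · rw [ha, hb]; exact hrmin s hscong hsne e z hre
end

section
/- Let S be an almost integral semiring with a zero element 0 and a least nonzero element e, such that for all a, b ∈ S with a ≰ b there exist c, d ∈ S¹ with cad ≠ 0 = cbd. Then S is subdirectly irreducible, and its least non-identical congruence is {(0,e),(e,0)} ∪ id_S. -/
/-- Sufficiency part of the structure theorem for almost integral subdirectly
irreducible semirings. -/
theorem stmt_12 {S : Type} (add mul : S → S → S) (hS : AlmostIntegral add mul)
    (z : S) (hz : IsZero add mul z)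
    (e : S) (he : e ≠ z) (hleast : ∀ x : S, x ≠ z → add e x = x)
    (hsep : ∀ a b : S, ¬ add a b = b → SepCond mul z a b) :
    SubIrr add mul ∧
      IsCong add mul (fun x y => x = y ∨ (x = z ∧ y = e) ∨ (x = e ∧ y = z)) ∧
      (fun x y => x = y ∨ (x = z ∧ y = e) ∨ (x = e ∧ y = z)) ≠ (· = · : S → S → Prop) ∧
      ∀ s : S → S → Prop, IsCong add mul s → s ≠ (· = ·) →
        ∀ a b : S, (a = b ∨ (a = z ∧ b = e) ∨ (a = e ∧ b = z)) → s a b := by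
  obtain ⟨⟨hcomm, hassoc, hmassoc, hldist, hrdist⟩, hidem, hai⟩ := hS
  set R : S → S → Prop := fun x y => x = y ∨ (x = z ∧ y = e) ∨ (x = e ∧ y = z) with hR
  have hanti : ∀ a b : S, add a b = b → add b a = a → a = b := by
    intro a b h1 h2
    rw [← h2, hcomm, h1]
  have habs : ∀ x y a : S, add (add x y) a = a → add x a = a := by
    intro x y a h
    conv_lhs => rw [← h]
    rw [← hassoc, ← hassoc, hidem, h]
  have hle : ∀ a b : S, add (mul a b) a = a ∧ add (mul b a) a = a := by
    intro a b
    refine ⟨habs (mul a b) (mul b a) a (hai a b), habs (mul b a) (mul a b) a ?_⟩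
    have h := hai a b
    rwa [hcomm (mul a b) (mul b a)] at h
  have haddz : ∀ x : S, add x z = x := fun x => by rw [hcomm]; exact (hz x).2.2
  have hadde : ∀ x : S, x ≠ z → add x e = x := fun x hx => by
    rw [hcomm]; exact hleast x hx
  have hee : ∀ c : S, mul e c = z ∨ mul e c = e := by
    intro c
    by_cases h : mul e c = z
    · exact Or.inl h
    · exact Or.inr (hanti _ _ (hle e c).1 (hleast _ h))
  have hce : ∀ c : S, mul c e = z ∨ mul c e = e := by
    intro c
    by_cases h : mul c e = z
    · exact Or.inl h
    · exact Or.inr (hanti _ _ (hle e c).2 (hleast _ h))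
  have hrsymm : ∀ x y, R x y → R y x := by
    rintro x y (rfl | ⟨rfl, rfl⟩ | ⟨rfl, rfl⟩)
    · exact Or.inl rfl
    · exact Or.inr (Or.inr ⟨rfl, rfl⟩)
    · exact Or.inr (Or.inl ⟨rfl, rfl⟩)
  have hrtrans : ∀ x y w, R x y → R y w → R x w := by
    rintro x y w (rfl | ⟨rfl, rfl⟩ | ⟨rfl, rfl⟩) hyw
    · exact hyw
    · rcases hyw with rfl | ⟨h1, rfl⟩ | ⟨h1, rfl⟩
      · exact Or.inr (Or.inl ⟨rfl, rfl⟩)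
      · exact absurd h1 he
      · exact Or.inl rfl
    · rcases hyw with rfl | ⟨h1, rfl⟩ | ⟨h1, rfl⟩
      · exact Or.inr (Or.inr ⟨rfl, rfl⟩)
      · exact Or.inl rfl
      · exact absurd h1.symm he
  have key : ∀ x, R (add x z) (add x e) := by
    intro x
    rw [haddz]
    by_cases hx : x = z
    · subst hx; rw [(hz e).2.2]; exact Or.inr (Or.inl ⟨rfl, rfl⟩)
    · rw [hadde x hx]; exact Or.inl rfl
  have keye : ∀ x, R z (mul e x) := by
    intro x
    rcases hee x with h | h <;> rw [h]
    · exact Or.inl rfl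
    · exact Or.inr (Or.inl ⟨rfl, rfl⟩)
  have keye' : ∀ x, R z (mul x e) := by
    intro x
    rcases hce x with h | h <;> rw [h]
    · exact Or.inl rfl
    · exact Or.inr (Or.inl ⟨rfl, rfl⟩)
  have hcong : IsCong add mul R := by
    refine ⟨⟨fun x => Or.inl rfl, fun h => hrsymm _ _ h,
      fun h1 h2 => hrtrans _ _ _ h1 h2⟩, ?_, ?_⟩
    · rintro a b c d h1 h2
      rcases h1 with h1 | ⟨ha, hb⟩ | ⟨ha, hb⟩ <;>
        rcases h2 with h2 | ⟨hc, hd⟩ | ⟨hc, hd⟩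
      · rw [h1, h2]; exact Or.inl rfl
      · rw [h1, hc, hd]; exact key b
      · rw [h1, hc, hd]; exact hrsymm _ _ (key b)
      · rw [ha, hb, h2, hcomm z d, hcomm e d]; exact key d
      · rw [ha, hb, hc, hd, hidem e, (hz z).2.2]; exact Or.inr (Or.inl ⟨rfl, rfl⟩)
      · rw [ha, hb, hc, hd, hcomm e z, (hz e).2.2]; exact Or.inl rfl
      · rw [ha, hb, h2, hcomm e d, hcomm z d]; exact hrsymm _ _ (key d)
      · rw [ha, hb, hc, hd, hcomm e z, (hz e).2.2]; exact Or.inl rfl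
      · rw [ha, hb, hc, hd, hidem e, (hz z).2.2]; exact Or.inr (Or.inr ⟨rfl, rfl⟩)
    · rintro a b c d h1 h2
      rcases h1 with h1 | ⟨ha, hb⟩ | ⟨ha, hb⟩ <;>
        rcases h2 with h2 | ⟨hc, hd⟩ | ⟨hc, hd⟩
      · rw [h1, h2]; exact Or.inl rfl
      · rw [h1, hc, hd, (hz b).2.1]; exact keye' b
      · rw [h1, hc, hd, (hz b).2.1]; exact hrsymm _ _ (keye' b)
      · rw [ha, hb, h2, (hz d).1]; exact keye d
      · rw [ha, hb, hc, hd, (hz z).1]; exact keye e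
      · rw [ha, hb, hc, hd, (hz e).1, (hz e).2.1]; exact Or.inl rfl
      · rw [ha, hb, h2, (hz d).1]; exact hrsymm _ _ (keye d)
      · rw [ha, hb, hc, hd, (hz e).2.1, (hz e).1]; exact Or.inl rfl
      · rw [ha, hb, hc, hd, (hz z).1]; exact hrsymm _ _ (keye e)
  have hne : R ≠ (· = · : S → S → Prop) := by
    intro h
    have h2 : R z e := Or.inr (Or.inl ⟨rfl, rfl⟩)
    rw [h] at h2
    exact he h2.symm
  have hmin : ∀ s : S → S → Prop, IsCong add mul s → s ≠ (· = ·) →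
      ∀ a b : S, R a b → s a b := by
    intro s hs hsne a b hab
    obtain ⟨⟨srefl, ssymm, strans⟩, sadd, smul⟩ := hs
    have hex : ∃ x y, s x y ∧ x ≠ y := by
      by_contra hc
      push_neg at hc
      apply hsne
      funext x y
      exact propext ⟨fun h => hc x y h, fun h => h ▸ srefl x⟩
    obtain ⟨x, y, hxy, hne'⟩ := hex
    have hu : ∃ u, u ≠ z ∧ s u z := by
      by_cases hxy' : add x y = y
      · have h2 : ¬ add y x = x := fun h => hne' (hanti x y hxy' h)
        have hyx := ssymm hxy
        rcases hsep y x h2 with ⟨h1, h2'⟩ | ⟨c, h1, h2'⟩ | ⟨d, h1, h2'⟩ | ⟨c, d, h1, h2'⟩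
        · exact ⟨y, h1, by rw [← h2']; exact hyx⟩
        · exact ⟨mul c y, h1, by rw [← h2']; exact smul c c y x (srefl c) hyx⟩
        · exact ⟨mul y d, h1, by rw [← h2']; exact smul y x d d hyx (srefl d)⟩
        · exact ⟨mul (mul c y) d, h1, by
            rw [← h2']; exact smul _ _ d d (smul c c y x (srefl c) hyx) (srefl d)⟩
      · rcases hsep x y hxy' with ⟨h1, h2'⟩ | ⟨c, h1, h2'⟩ | ⟨d, h1, h2'⟩ | ⟨c, d, h1, h2'⟩
        · exact ⟨x, h1, by rw [← h2']; exact hxy⟩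
        · exact ⟨mul c x, h1, by rw [← h2']; exact smul c c x y (srefl c) hxy⟩
        · exact ⟨mul x d, h1, by rw [← h2']; exact smul x y d d hxy (srefl d)⟩
        · exact ⟨mul (mul c x) d, h1, by
            rw [← h2']; exact smul _ _ d d (smul c c x y (srefl c) hxy) (srefl d)⟩
    obtain ⟨u, hune, huz⟩ := hu
    have hue : s u e := by
      have h := sadd e e u z (srefl e) huz
      rwa [hleast u hune, hcomm e z, (hz e).2.2] at h
    have hze : s z e := strans (ssymm huz) hue
    rcases hab with rfl | ⟨rfl, rfl⟩ | ⟨rfl, rfl⟩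
    · exact srefl a
    · exact hze
    · exact ssymm hze
  exact ⟨⟨R, hcong, hne, hmin⟩, hcong, hne, hmin⟩
end

section
/- Let S be an almost integral semiring. If S is congruence-simple, then |S| = 2; and M_n(S) is congruence-simple for some n ≥ 2 if and only if S is isomorphic to the two-element lattice L_2(∨, ∧) viewed as a semiring. -/
/-! ### Auxiliary lemmas -/

section PartA
variable {S : Type} (add mul : S → S → S)

lemma aux_key_two (hS : AlmostIntegral add mul) (hC : CongSimple add mul) :
    ∃ o t : S, o ≠ t ∧ (∀ x, x = o ∨ x = t) ∧ (∀ x, add x t = t) ∧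
      mul o t = o ∧ mul t o = o ∧ mul o o = o := by
  obtain ⟨⟨hcomm, hassoc, _, hdl, hdr⟩, hidem, hai⟩ := hS
  obtain ⟨⟨a₀, b₀, hab⟩, hdich⟩ := hC
  have hle_trans : ∀ {x y z : S}, add x y = y → add y z = z → add x z = z := by
    intro x y z h1 h2
    calc add x z = add x (add y z) := by rw [h2]
    _ = add (add x y) z := (hassoc _ _ _).symm
    _ = z := by rw [h1, h2]
  have hle_left : ∀ x y : S, add x (add x y) = add x y := by
    intro x y; rw [← hassoc, hidem]
  have hle_right : ∀ x y : S, add y (add x y) = add x y := by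
    intro x y; rw [hcomm x y]; exact hle_left y x
  have hmul_le_left : ∀ a b : S, add (mul a b) a = a := by
    intro a b; exact hle_trans (hle_left (mul a b) (mul b a)) (hai a b)
  have hmul_le_right : ∀ a b : S, add (mul a b) b = b := by
    intro a b; exact hle_trans (hle_right (mul b a) (mul a b)) (hai b a)
  have hcong : ∀ w : S, IsCong add mul (fun a b => add a w = add b w) := by
    intro w
    refine ⟨⟨fun _ => rfl, fun h => h.symm, fun h1 h2 => h1.trans h2⟩, ?_, ?_⟩
    · intro a b c d h1 h2
      have e : ∀ x z : S, add (add x z) w = add (add x w) (add z w) := by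
        intro x z
        calc add (add x z) w = add (add x z) (add w w) := by rw [hidem]
        _ = add x (add z (add w w)) := by rw [hassoc]
        _ = add x (add (add z w) w) := by rw [hassoc]
        _ = add x (add (add w z) w) := by rw [hcomm z w]
        _ = add x (add w (add z w)) := by rw [hassoc]
        _ = add (add x w) (add z w) := by rw [← hassoc]
      rw [e, e, h1, h2]
    · intro a b c d h1 h2
      have e : ∀ x z : S, add (mul x z) w = add (mul (add x w) (add z w)) w := by
        intro x z
        have expand : mul (add x w) (add z w)
            = add (add (mul x z) (mul x w)) (add (mul w z) (mul w w)) := by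
          rw [hdr, hdl, hdl]
        rw [expand]
        have hxw : add (mul x w) w = w := hmul_le_right x w
        have hwz : add (mul w z) w = w := hmul_le_left w z
        have hww : add (mul w w) w = w := hmul_le_left w w
        refine Eq.symm ?_
        calc add (add (add (mul x z) (mul x w)) (add (mul w z) (mul w w))) w
            = add (mul x z) (add (mul x w) (add (mul w z) (add (mul w w) w))) := by
              rw [hassoc, hassoc, hassoc]
        _ = add (mul x z) (add (mul x w) (add (mul w z) w)) := by rw [hww]
        _ = add (mul x z) (add (mul x w) w) := by rw [hwz]
        _ = add (mul x z) w := by rw [hxw]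
      rw [e a c, e b d, h1, h2]
  set t := add a₀ b₀ with ht
  have hρt : ¬ ((fun a b => add a t = add b t) = (fun a b : S => a = b)) := by
    intro h
    have : add a₀ t = add b₀ t → a₀ = b₀ := by
      intro hh; have := congrFun (congrFun h a₀) b₀; rw [this] at hh; exact hh
    apply hab; apply this
    rw [ht, ← hassoc, hidem, hcomm b₀ (add a₀ b₀), hassoc, hidem]
  have htop : ∀ x, add x t = t := by
    rcases hdich _ (hcong t) with h | h
    · exact absurd h hρt
    · intro x
      have h1 : add x t = add t t := by
        have := congrFun (congrFun h x) t; rw [this]; trivial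
      rw [h1, hidem]
  have hmin : ∀ w, w ≠ t → ∀ x, add x w = w → x = w := by
    intro w hw x hx
    rcases hdich _ (hcong w) with h | h
    · have hc := congrFun (congrFun h x) w
      have hx' : add x w = add w w := by rw [hidem]; exact hx
      exact cast hc hx'
    · exfalso; apply hw
      have h1 : add w w = add t w := by
        have := congrFun (congrFun h w) t; rw [this]; trivial
      rw [hidem, hcomm t w, htop w] at h1; exact h1
  have honly : ∀ x y, x ≠ t → y ≠ t → x = y := by
    intro x y hx hy
    have e1 : mul x y = x := hmin x hx _ (hmul_le_left x y)
    have e2 : mul x y = y := hmin y hy _ (hmul_le_right x y)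
    rw [← e1, e2]
  have hone : a₀ ≠ t ∨ b₀ ≠ t := by
    by_contra h; push_neg at h; exact hab (h.1.trans h.2.symm)
  obtain ⟨o, ho⟩ : ∃ o : S, o ≠ t := by
    rcases hone with h | h
    · exact ⟨a₀, h⟩
    · exact ⟨b₀, h⟩
  have hall : ∀ x, x = o ∨ x = t := by
    intro x; by_cases hx : x = t
    · right; exact hx
    · left; exact honly x o hx ho
  have hmul_ne_t : ∀ x y : S, add (mul x y) o = o → mul x y = o := by
    intro x y h
    rcases hall (mul x y) with h' | h'
    · exact h'
    · exfalso; apply ho; rw [h', hcomm, htop] at h; exact h.symm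
  exact ⟨o, t, ho, hall, htop,
    hmul_ne_t o t (hmul_le_left o t),
    hmul_ne_t t o (hmul_le_right t o),
    hmul_ne_t o o (hmul_le_left o o)⟩

end PartA

section Fwd
variable {S : Type} (add mul : S → S → S)

lemma aux_finSum_rel (r : S → S → Prop)
    (haddc : ∀ a b c d, r a b → r c d → r (add a c) (add b d)) :
    ∀ {n : ℕ} (f g : Fin (n + 1) → S), (∀ k, r (f k) (g k)) →
      r (finSum add f) (finSum add g) := by
  intro n
  induction n with
  | zero => intro f g h; exact h 0
  | succ n ih =>
    intro f g h
    exact haddc _ _ _ _ (ih _ _ fun k => h k.castSucc) (h (Fin.last _))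

lemma aux_mat_congsimple_down {m : ℕ}
    (hMC : CongSimple (T := Fin (m + 2) → Fin (m + 2) → S) (matAdd add) (matMul add mul)) :
    CongSimple add mul := by
  constructor
  · obtain ⟨A, B, hAB⟩ := hMC.1
    by_contra h
    push_neg at h
    exact hAB (funext fun i => funext fun j => h _ _)
  · intro r hr
    set R : (Fin (m + 2) → Fin (m + 2) → S) → (Fin (m + 2) → Fin (m + 2) → S) → Prop :=
      fun A B => ∀ i j, r (A i j) (B i j) with hR
    have hRc : IsCong (matAdd add) (matMul add mul) R := by
      refine ⟨⟨fun A i j => hr.1.refl _, fun h i j => hr.1.symm (h i j),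
        fun h1 h2 i j => hr.1.trans (h1 i j) (h2 i j)⟩, ?_, ?_⟩
      · intro A B C D h1 h2 i j
        exact hr.2.1 _ _ _ _ (h1 i j) (h2 i j)
      · intro A B C D h1 h2 i j
        exact aux_finSum_rel add r hr.2.1 _ _ fun k => hr.2.2 _ _ _ _ (h1 i k) (h2 k j)
    rcases hMC.2 R hRc with h | h
    · left
      funext a b
      refine propext ⟨fun hab => ?_, fun hab => hab ▸ hr.1.refl a⟩
      have hc : R (fun _ _ => a) (fun _ _ => b) := fun _ _ => hab
      have := congrFun (congrFun h (fun _ _ => a)) (fun _ _ => b)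
      rw [this] at hc
      exact congrFun (congrFun hc 0) 0
    · right
      funext a b
      refine propext ⟨fun _ => trivial, fun _ => ?_⟩
      have hc : R (fun _ _ => a) (fun _ _ => b) := by
        have := congrFun (congrFun h (fun _ _ => a)) (fun _ _ => b)
        rw [this]; trivial
      exact hc 0 0

lemma aux_finSum_const {o : S} (ho : add o o = o) :
    ∀ {n : ℕ}, finSum add (fun _ : Fin (n + 1) => o) = o := by
  intro n
  induction n with
  | zero => rfl
  | succ n ih =>
    show add (finSum add _) o = o
    rw [show (fun i : Fin (n+1) => o) = (fun _ => o) from rfl, ih, ho]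

lemma aux_not_null {m : ℕ} (o t : S) (hot : o ≠ t) (hoo : add o o = o)
    (hnull : ∀ x y, mul x y = o)
    (hMC : CongSimple (T := Fin (m + 2) → Fin (m + 2) → S) (matAdd add) (matMul add mul)) :
    False := by
  set R : (Fin (m + 2) → Fin (m + 2) → S) → (Fin (m + 2) → Fin (m + 2) → S) → Prop :=
    fun A B => A 0 0 = B 0 0 with hR
  have hmm : ∀ A B : Fin (m + 2) → Fin (m + 2) → S, matMul add mul A B 0 0 = o := by
    intro A B
    show finSum add (fun k => mul (A 0 k) (B k 0)) = o
    rw [show (fun k => mul (A 0 k) (B k 0)) = (fun _ : Fin (m+2) => o) from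
      funext fun k => hnull _ _]
    exact aux_finSum_const add hoo
  have hRc : IsCong (matAdd add) (matMul add mul) R := by
    refine ⟨⟨fun A => rfl, fun h => h.symm, fun h1 h2 => h1.trans h2⟩, ?_, ?_⟩
    · intro A B C D h1 h2
      show add (A 0 0) (C 0 0) = add (B 0 0) (D 0 0)
      rw [hR] at h1 h2; rw [h1, h2]
    · intro A B C D _ _
      show matMul add mul A C 0 0 = matMul add mul B D 0 0
      rw [hmm, hmm]
  have hone : (⟨1, by omega⟩ : Fin (m + 2)) ≠ 0 := by
    intro h
    have := congrArg Fin.val h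
    simp at this
  rcases hMC.2 R hRc with h | h
  · set B : Fin (m + 2) → Fin (m + 2) → S := fun i j => if i = 0 ∧ j = 0 then o else t with hB
    have h1 : R (fun _ _ => o) B := by
      show o = B 0 0
      rw [hB]; simp
    have := congrFun (congrFun h (fun _ _ => o)) B
    rw [this] at h1
    have h2 := congrFun (congrFun h1 0) (⟨1, by omega⟩ : Fin (m + 2))
    rw [hB] at h2
    simp only [if_neg
      (fun hc : (0 : Fin (m+2)) = 0 ∧ (⟨1, by omega⟩ : Fin (m+2)) = 0 => hone hc.2)] at h2
    exact hot h2
  · have h1 : R (fun _ _ => o) (fun _ _ => t) := by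
      have := congrFun (congrFun h (fun _ _ => o)) (fun _ _ => t)
      rw [this]; trivial
    exact hot h1

end Fwd

/-! ### Simplicity of 2×2 matrices over the two-element lattice (on `Bool`) -/

def auxE (k l : Fin 2) : Fin 2 → Fin 2 → Bool := fun p q => decide (p = k) && decide (q = l)

lemma auxE_comp : ∀ (k i j l : Fin 2) (A : Fin 2 → Fin 2 → Bool),
    matMul (n := 1) or and (matMul (n := 1) or and (auxE k i) A) (auxE j l)
      = fun p q => (decide (p = k) && decide (q = l)) && A i j := by decide

lemma aux_master_step {r : (Fin 2 → Fin 2 → Bool) → (Fin 2 → Fin 2 → Bool) → Prop}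
    (heqv : Equivalence r)
    (haddc : ∀ a b c d, r a b → r c d → r (matAdd or a c) (matAdd or b d))
    (hmulc : ∀ a b c d, r a b → r c d →
      r (matMul (n := 1) or and a c) (matMul (n := 1) or and b d))
    {A B : Fin 2 → Fin 2 → Bool} {i j : Fin 2} (hr : r A B)
    (hA : A i j = true) (hB : B i j = false) : ∀ X Y, r X Y := by
  have step1 : ∀ k l, r (auxE k l) (fun _ _ => false) := by
    intro k l
    have h := hmulc _ _ _ _ (hmulc _ _ _ _ (heqv.refl (auxE k i)) hr) (heqv.refl (auxE j l))
    rw [auxE_comp, auxE_comp, hA, hB] at h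
    have e1 : (fun p q => (decide (p = k) && decide (q = l)) && true) = auxE k l := by
      funext p q; simp [auxE]
    have e2 : (fun p q => (decide (p = k) && decide (q = l)) && false)
        = (fun _ _ => false : Fin 2 → Fin 2 → Bool) := by
      funext p q; simp
    rwa [e1, e2] at h
  have step2 : r (fun _ _ => true) (fun _ _ => false) := by
    have h := haddc _ _ _ _
      (haddc _ _ _ _ (haddc _ _ _ _ (step1 0 0) (step1 0 1)) (step1 1 0)) (step1 1 1)
    have e1 : matAdd or (matAdd or (matAdd or (auxE 0 0) (auxE 0 1)) (auxE 1 0)) (auxE 1 1)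
        = (fun _ _ => true : Fin 2 → Fin 2 → Bool) := by decide
    have e2 : matAdd (n := 2) or
        (matAdd or (matAdd or (fun _ _ => false) (fun _ _ => false)) (fun _ _ => false))
        (fun _ _ => false) = (fun _ _ => false : Fin 2 → Fin 2 → Bool) := by decide
    rwa [e1, e2] at h
  have step3 : ∀ X, r X (fun _ _ => true) := by
    intro X
    have h := haddc _ _ _ _ (heqv.refl X) (heqv.symm step2)
    have e1 : matAdd or X (fun _ _ => false) = X := by funext p q; simp [matAdd]
    have e2 : matAdd or X (fun _ _ => true) = (fun _ _ => true : Fin 2 → Fin 2 → Bool) := by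
      funext p q; simp [matAdd]
    rwa [e1, e2] at h
  exact fun X Y => heqv.trans (step3 X) (heqv.symm (step3 Y))

lemma aux_master :
    CongSimple (T := Fin 2 → Fin 2 → Bool) (matAdd or) (matMul (n := 1) or and) := by
  constructor
  · exact ⟨fun _ _ => false, fun _ _ => true, fun h => by
      have := congrFun (congrFun h 0) 0; simp at this⟩
  · rintro r ⟨heqv, haddc, hmulc⟩
    by_cases hd : ∀ A B, r A B → A = B
    · left; funext A B; exact propext ⟨hd A B, fun h => h ▸ heqv.refl A⟩
    · right
      push_neg at hd
      obtain ⟨A, B, hr, hne⟩ := hd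
      have : ∃ i j, A i j ≠ B i j := by
        by_contra h; push_neg at h; exact hne (funext fun i => funext fun j => h i j)
      obtain ⟨i, j, hij⟩ := this
      have hall : ∀ X Y, r X Y := by
        rcases hA : A i j with _ | _ <;> rcases hB : B i j with _ | _
        · exact absurd (hA.trans hB.symm) hij
        · exact aux_master_step heqv haddc hmulc (heqv.symm hr) hB hA
        · exact aux_master_step heqv haddc hmulc hr hA hB
        · exact absurd (hA.trans hB.symm) hij
      funext X Y; exact propext ⟨fun _ => trivial, fun _ => hall X Y⟩

lemma aux_backward {S : Type} (add mul : S → S → S) (φ : S → Bool)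
    (hbij : Function.Bijective φ)
    (hhom : ∀ a b : S, φ (add a b) = (φ a || φ b) ∧ φ (mul a b) = (φ a && φ b)) :
    CongSimple (T := Fin (0 + 2) → Fin (0 + 2) → S) (matAdd add) (matMul add mul) := by
  set eqv := Equiv.ofBijective φ hbij with heqv
  set ψ : Bool → S := fun c => eqv.symm c with hψ
  have hφψ : ∀ c, φ (ψ c) = c := fun c => eqv.apply_symm_apply c
  have hψφ : ∀ s, ψ (φ s) = s := fun s => eqv.symm_apply_apply s
  have hψadd : ∀ c d, ψ (c || d) = add (ψ c) (ψ d) := by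
    intro c d
    apply hbij.1
    rw [hφψ, (hhom _ _).1, hφψ, hφψ]
  have hψmul : ∀ c d, ψ (c && d) = mul (ψ c) (ψ d) := by
    intro c d
    apply hbij.1
    rw [hφψ, (hhom _ _).2, hφψ, hφψ]
  have hmadd : ∀ X Y : Fin 2 → Fin 2 → Bool,
      (fun i j => ψ (matAdd or X Y i j))
        = matAdd add (fun i j => ψ (X i j)) (fun i j => ψ (Y i j)) := by
    intro X Y; funext i j; exact hψadd _ _
  have hmmul : ∀ X Y : Fin 2 → Fin 2 → Bool,
      (fun i j => ψ (matMul (n := 1) or and X Y i j))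
        = matMul (n := 1) add mul (fun i j => ψ (X i j)) (fun i j => ψ (Y i j)) := by
    intro X Y; funext i j
    show ψ ((X i 0 && Y 0 j) || (X i 1 && Y 1 j))
        = add (mul (ψ (X i 0)) (ψ (Y 0 j))) (mul (ψ (X i 1)) (ψ (Y 1 j)))
    rw [hψadd, hψmul, hψmul]
  constructor
  · refine ⟨(fun _ _ => ψ false), (fun _ _ => ψ true), fun h => ?_⟩
    have := congrFun (congrFun h 0) 0
    have h2 := congrArg φ this
    rw [hφψ, hφψ] at h2
    simp at h2
  · intro r hr
    set r' : (Fin 2 → Fin 2 → Bool) → (Fin 2 → Fin 2 → Bool) → Prop :=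
      fun X Y => r (fun i j => ψ (X i j)) (fun i j => ψ (Y i j)) with hr'
    have hr'c : IsCong (matAdd or) (matMul (n := 1) or and) r' := by
      refine ⟨⟨fun X => hr.1.refl _, fun h => hr.1.symm h, fun h1 h2 => hr.1.trans h1 h2⟩,
        ?_, ?_⟩
      · intro X Y Z W h1 h2
        show r (fun i j => ψ (matAdd or X Z i j)) (fun i j => ψ (matAdd or Y W i j))
        rw [hmadd, hmadd]
        exact hr.2.1 _ _ _ _ h1 h2
      · intro X Y Z W h1 h2
        show r (fun i j => ψ (matMul (n := 1) or and X Z i j))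
          (fun i j => ψ (matMul (n := 1) or and Y W i j))
        rw [hmmul, hmmul]
        exact hr.2.2 _ _ _ _ h1 h2
    have hback : ∀ A : Fin 2 → Fin 2 → S, (fun i j => ψ (φ (A i j))) = A := by
      intro A; funext i j; exact hψφ _
    rcases aux_master.2 r' hr'c with h | h
    · left
      funext A B
      refine propext ⟨fun hab => ?_, fun hab => hab ▸ hr.1.refl A⟩
      have h1 : r' (fun p q => φ (A p q)) (fun p q => φ (B p q)) := by
        show r (fun i j => ψ (φ (A i j))) (fun i j => ψ (φ (B i j)))
        rw [hback, hback]; exact hab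
      have := congrFun (congrFun h (fun p q => φ (A p q))) (fun p q => φ (B p q))
      rw [this] at h1
      funext i j
      have := congrFun (congrFun h1 i) j
      exact hbij.1 this
    · right
      funext A B
      refine propext ⟨fun _ => trivial, fun _ => ?_⟩
      have h1 : r' (fun p q => φ (A p q)) (fun p q => φ (B p q)) := by
        have := congrFun (congrFun h (fun p q => φ (A p q))) (fun p q => φ (B p q))
        rw [this]; trivial
      have h2 : r (fun i j => ψ (φ (A i j))) (fun i j => ψ (φ (B i j))) := h1
      rw [hback, hback] at h2
      exact h2

/-- For an almost integral semiring: congruence-simplicity forces `|S| = 2`,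
and `M_n(S)` is congruence-simple for some `n ≥ 2` iff `S ≅ L₂(∨,∧)`. -/
theorem stmt_13 {S : Type} (add mul : S → S → S) (hS : AlmostIntegral add mul) :
    (CongSimple add mul → ∃ a b : S, a ≠ b ∧ ∀ x : S, x = a ∨ x = b) ∧
      ((∃ m : ℕ,
          CongSimple (T := Fin (m + 2) → Fin (m + 2) → S) (matAdd add) (matMul add mul)) ↔
        ∃ φ : S → Bool, Function.Bijective φ ∧
          ∀ a b : S, φ (add a b) = (φ a || φ b) ∧ φ (mul a b) = (φ a && φ b)) := by
  classical
  constructor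
  · intro hC
    obtain ⟨o, t, ho, hall, -⟩ := aux_key_two add mul hS hC
    exact ⟨o, t, ho, hall⟩
  · constructor
    · rintro ⟨m, hMC⟩
      have hC : CongSimple add mul := aux_mat_congsimple_down add mul hMC
      obtain ⟨o, t, ho, hall, htop, hot, hto, hoo⟩ := aux_key_two add mul hS hC
      obtain ⟨⟨hcomm, hassoc, _, _, _⟩, hidem, hai⟩ := hS
      have htt : mul t t = t := by
        by_contra htt
        have htt' : mul t t = o := by
          rcases hall (mul t t) with h | h
          · exact h
          · exact absurd h htt
        have hnull : ∀ x y, mul x y = o := by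
          intro x y
          rcases hall x with rfl | rfl <;> rcases hall y with rfl | rfl
          · exact hoo
          · exact hot
          · exact hto
          · exact htt'
        exact aux_not_null add mul o t ho (hidem o) hnull hMC
      refine ⟨fun x => if x = t then true else false, ⟨?_, ?_⟩, ?_⟩
      · intro a b hab
        rcases hall a with rfl | rfl <;> rcases hall b with rfl | rfl
        · rfl
        · simp [ho] at hab
        · simp [ho] at hab
        · rfl
      · intro c
        rcases c with _ | _
        · exact ⟨o, by simp [ho]⟩
        · exact ⟨t, by simp⟩
      · intro a b
        have haddot : add o t = t := htop o
        have haddto : add t o = t := by rw [hcomm]; exact htop o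
        rcases hall a with rfl | rfl <;> rcases hall b with rfl | rfl <;>
          constructor <;> simp [ho, hidem, haddot, haddto, hot, hto, hoo, htt, htop]
    · rintro ⟨φ, hbij, hhom⟩
      exact ⟨0, aux_backward add mul φ hbij hhom⟩
end
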